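/- arXiv:0810.1808 — 4 statements merged into one kernel-verified Lean document; each statement's English description precedes it below -/
import Mathlib

section
/- In the separable case σ²_{nk}(K) = d_n(K) d̃_k(K), given ρ > 0, the system of two equations δ = (1/K) tr( D ( ρ (I_N + δ̃ D) )^{-1} ) and δ̃ = (1/K) tr( D̃ ( ρ (I_K + δ D̃) )^{-1} ) admits a unique solution (δ_K(ρ), δ̃_K(ρ)) in nonnegative reals. Moreover, the matrices T_K(−ρ) = (1/ρ)(I_N + δ̃_K(ρ) D)^{-1} and T̃_K(−ρ) = (1/ρ)(I_K + δ_K(ρ) D̃)^{-1} then satisfy the general N+K deterministic system t_n = 1/( ρ (1 + (1/K) tr( D̃_n T̃ )) ), t̃_k = 1/( ρ (1 + (1/K) tr( D_k T )) ) with D_k = d̃_k D and D̃_n = d_n D̃. -/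
/-!
Write `f_c y = κ ∑ᵢ cᵢ / (ρ (1 + y cᵢ))`, so that the system reads `x = f_c y`, `y = f_e x`.
The map `f_c` is antitone on `[0, ∞)`, while `y f_c y = (κ/ρ) ∑ᵢ y cᵢ / (1 + y cᵢ)` is monotone,
strictly so wherever `f_c` strictly decreases. Existence: `y ↦ f_e (f_c y)` maps `[0, f_e 0]` into
itself, so the intermediate value theorem gives a fixed point. Uniqueness: for two solutions with
`y₁ ≤ y₂` we get `x₂ ≤ x₁`; the product `x y` is then both `≤` (as `y f_c y`) and `≥` (as `x f_e x`)
when passing from the first solution to the second, which forces `x₁ = x₂` and then `y₁ = y₂`.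
In the separable case `(1/K) ∑ₖ dₙ d̃ₖ t̃ₖ = dₙ δ̃`, which gives the deterministic equivalent.
-/

open Finset Set

section Scalar

variable {ρ c y₁ y₂ : ℝ}

lemma mul_div_one_add_mul_le (hρ : 0 < ρ) (hc : 0 ≤ c) (hy₁ : 0 ≤ y₁) (hy : y₁ ≤ y₂) :
    y₁ * (c / (ρ * (1 + y₁ * c))) ≤ y₂ * (c / (ρ * (1 + y₂ * c))) := by
  have : 0 ≤ y₂ := hy₁.trans hy
  rw [mul_div_assoc', mul_div_assoc', div_le_div_iff₀ (by positivity) (by positivity)]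
  have : 0 ≤ ρ * c * (y₂ - y₁) := by have := sub_nonneg.2 hy; positivity
  nlinarith

lemma mul_div_one_add_mul_lt (hρ : 0 < ρ) (hc : 0 ≤ c) (hy₁ : 0 ≤ y₁) (hy : y₁ ≤ y₂)
    (h : c / (ρ * (1 + y₂ * c)) < c / (ρ * (1 + y₁ * c))) :
    y₁ * (c / (ρ * (1 + y₁ * c))) < y₂ * (c / (ρ * (1 + y₂ * c))) := by
  have hc' : 0 < c := hc.lt_of_ne (by rintro rfl; simp at h)
  have hy' : y₁ < y₂ := hy.lt_of_ne (by rintro rfl; exact lt_irrefl _ h)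
  have : 0 < y₂ := hy₁.trans_lt hy'
  rw [mul_div_assoc', mul_div_assoc', div_lt_div_iff₀ (by positivity) (by positivity)]
  have : 0 < ρ * c * (y₂ - y₁) := by have := sub_pos.2 hy'; positivity
  nlinarith

end Scalar

variable {ι : Type*} [Fintype ι] {κ ρ : ℝ} {c : ι → ℝ}

/-- `κ · tr (C (ρ (I + y C))⁻¹)` for the diagonal matrix `C = diag c`. -/
noncomputable def resolventTrace (κ ρ : ℝ) (c : ι → ℝ) (y : ℝ) : ℝ :=
  κ * ∑ i, c i / (ρ * (1 + y * c i))

lemma resolventTrace_nonneg (hκ : 0 ≤ κ) (hρ : 0 < ρ) (hc : ∀ i, 0 ≤ c i) {y : ℝ} (hy : 0 ≤ y) :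
    0 ≤ resolventTrace κ ρ c y :=
  mul_nonneg hκ <| sum_nonneg fun i _ => by have := hc i; positivity

lemma continuousOn_resolventTrace (hρ : 0 < ρ) (hc : ∀ i, 0 ≤ c i) :
    ContinuousOn (resolventTrace κ ρ c) (Ici 0) := by
  refine continuousOn_const.mul <| continuousOn_finsetSum _ fun i _ =>
    continuousOn_const.div (by fun_prop) fun y (hy : 0 ≤ y) => ?_
  have := hc i
  positivity

lemma antitoneOn_resolventTrace (hκ : 0 ≤ κ) (hρ : 0 < ρ) (hc : ∀ i, 0 ≤ c i) :
    AntitoneOn (resolventTrace κ ρ c) (Ici 0) := by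
  intro y₁ (hy₁ : 0 ≤ y₁) y₂ _ hy
  refine mul_le_mul_of_nonneg_left (sum_le_sum fun i _ => ?_) hκ
  have := hc i
  gcongr

lemma mul_resolventTrace (y : ℝ) :
    y * resolventTrace κ ρ c y = κ * ∑ i, y * (c i / (ρ * (1 + y * c i))) := by
  rw [resolventTrace, mul_left_comm, mul_sum]

lemma monotoneOn_mul_resolventTrace (hκ : 0 ≤ κ) (hρ : 0 < ρ) (hc : ∀ i, 0 ≤ c i) :
    MonotoneOn (fun y => y * resolventTrace κ ρ c y) (Ici 0) := by
  intro y₁ (hy₁ : 0 ≤ y₁) y₂ _ hy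
  simp only [mul_resolventTrace]
  exact mul_le_mul_of_nonneg_left
    (sum_le_sum fun i _ => mul_div_one_add_mul_le hρ (hc i) hy₁ hy) hκ

lemma mul_resolventTrace_lt (hκ : 0 ≤ κ) (hρ : 0 < ρ) (hc : ∀ i, 0 ≤ c i) {y₁ y₂ : ℝ}
    (hy₁ : 0 ≤ y₁) (hy : y₁ ≤ y₂) (h : resolventTrace κ ρ c y₂ < resolventTrace κ ρ c y₁) :
    y₁ * resolventTrace κ ρ c y₁ < y₂ * resolventTrace κ ρ c y₂ := by
  have hκ' : 0 < κ := hκ.lt_of_ne (by rintro rfl; simp [resolventTrace] at h)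
  obtain ⟨j, -, hj⟩ := exists_lt_of_sum_lt (lt_of_mul_lt_mul_left h hκ)
  simp only [mul_resolventTrace]
  exact mul_lt_mul_of_pos_left (sum_lt_sum (fun i _ => mul_div_one_add_mul_le hρ (hc i) hy₁ hy)
    ⟨j, mem_univ j, mul_div_one_add_mul_lt hρ (hc j) hy₁ hy hj⟩) hκ'

variable {ι' : Type*} [Fintype ι'] {e : ι' → ℝ}

lemma eq_of_resolventTrace_fixedPoint (hκ : 0 ≤ κ) (hρ : 0 < ρ) (hc : ∀ i, 0 ≤ c i)
    (he : ∀ i, 0 ≤ e i) {x₁ y₁ x₂ y₂ : ℝ} (hy₁ : 0 ≤ y₁) (hy₂ : 0 ≤ y₂)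
    (hx₁ : x₁ = resolventTrace κ ρ c y₁) (hy₁e : y₁ = resolventTrace κ ρ e x₁)
    (hx₂ : x₂ = resolventTrace κ ρ c y₂) (hy₂e : y₂ = resolventTrace κ ρ e x₂) :
    x₁ = x₂ ∧ y₁ = y₂ := by
  wlog hy : y₁ ≤ y₂ generalizing x₁ y₁ x₂ y₂
  · exact (this hy₂ hy₁ hx₂ hy₂e hx₁ hy₁e (le_of_not_ge hy)).imp Eq.symm Eq.symm
  have hx₂₁ : x₂ ≤ x₁ := hx₁ ▸ hx₂ ▸ antitoneOn_resolventTrace hκ hρ hc hy₁ hy₂ hy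
  have hx : x₁ = x₂ := by
    refine (hx₂₁.lt_or_eq.resolve_left fun hlt => ?_).symm
    have hlt' := mul_resolventTrace_lt hκ hρ hc hy₁ hy (hx₁ ▸ hx₂ ▸ hlt)
    have hle := monotoneOn_mul_resolventTrace hκ hρ he
      (hx₂ ▸ resolventTrace_nonneg hκ hρ hc hy₂ : 0 ≤ x₂)
      (hx₁ ▸ resolventTrace_nonneg hκ hρ hc hy₁ : 0 ≤ x₁) hx₂₁
    rw [← hx₁, ← hx₂] at hlt'
    simp only [← hy₁e, ← hy₂e] at hle
    linarith
  exact ⟨hx, by rw [hy₁e, hy₂e, hx]⟩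

lemma exists_resolventTrace_fixedPoint (hκ : 0 ≤ κ) (hρ : 0 < ρ) (hc : ∀ i, 0 ≤ c i)
    (he : ∀ i, 0 ≤ e i) :
    ∃ y, 0 ≤ y ∧ y = resolventTrace κ ρ e (resolventTrace κ ρ c y) := by
  set M := resolventTrace κ ρ e 0
  have hM : 0 ≤ M := resolventTrace_nonneg hκ hρ he le_rfl
  have hcont : ContinuousOn (fun y => resolventTrace κ ρ e (resolventTrace κ ρ c y) - y)
      (Icc 0 M) :=
    ((continuousOn_resolventTrace hρ he).comp
      ((continuousOn_resolventTrace hρ hc).mono Icc_subset_Ici_self)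
      fun y hy => resolventTrace_nonneg hκ hρ hc hy.1).sub continuousOn_id
  have h₀ : 0 ≤ resolventTrace κ ρ e (resolventTrace κ ρ c 0) - 0 := by
    rw [sub_zero]
    exact resolventTrace_nonneg hκ hρ he (resolventTrace_nonneg hκ hρ hc le_rfl)
  have hM' : resolventTrace κ ρ e (resolventTrace κ ρ c M) - M ≤ 0 :=
    sub_nonpos.2 <| antitoneOn_resolventTrace hκ hρ he (le_refl (0 : ℝ))
      (resolventTrace_nonneg hκ hρ hc hM) (resolventTrace_nonneg hκ hρ hc hM)
  obtain ⟨y, hy, hy0⟩ := intermediate_value_Icc' hM hcont ⟨hM', h₀⟩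
  exact ⟨y, hy.1, (sub_eq_zero.1 hy0).symm⟩

theorem existsUnique_resolventTrace_fixedPoint (hκ : 0 ≤ κ) (hρ : 0 < ρ) (hc : ∀ i, 0 ≤ c i)
    (he : ∀ i, 0 ≤ e i) :
    ∃! q : ℝ × ℝ, (0 ≤ q.1 ∧ 0 ≤ q.2) ∧
      q.1 = resolventTrace κ ρ c q.2 ∧ q.2 = resolventTrace κ ρ e q.1 := by
  obtain ⟨y, hy, hfix⟩ := exists_resolventTrace_fixedPoint hκ hρ hc he
  refine ⟨(resolventTrace κ ρ c y, y), ⟨⟨resolventTrace_nonneg hκ hρ hc hy, hy⟩, rfl, hfix⟩, ?_⟩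
  rintro ⟨x', y'⟩ ⟨⟨-, hy'⟩, hx'e, hy'e⟩
  obtain ⟨hx, hy⟩ := eq_of_resolventTrace_fixedPoint hκ hρ hc he hy' hy hx'e hy'e rfl hfix
  exact Prod.ext hx hy

lemma sum_mul_mul_one_div_eq (a x : ℝ) :
    κ * ∑ i, a * c i * (1 / (ρ * (1 + x * c i))) = resolventTrace κ ρ c x * a := by
  simp only [resolventTrace, mul_sum, sum_mul]
  exact sum_congr rfl fun i _ => by ring

theorem stmt_4_general (N K : ℕ) (ρ : ℝ) (hρ : 0 < ρ)
    (d : Fin N → ℝ) (dt : Fin K → ℝ)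
    (hd : ∀ n, 0 ≤ d n) (hdt : ∀ k, 0 ≤ dt k) :
    (∃! q : ℝ × ℝ, (0 ≤ q.1 ∧ 0 ≤ q.2) ∧
        q.1 = (1 / (K : ℝ)) * ∑ n, d n / (ρ * (1 + q.2 * d n)) ∧
        q.2 = (1 / (K : ℝ)) * ∑ k, dt k / (ρ * (1 + q.1 * dt k))) ∧
    (∀ δ δt : ℝ, 0 ≤ δ → 0 ≤ δt →
        δ = (1 / (K : ℝ)) * ∑ n, d n / (ρ * (1 + δt * d n)) →
        δt = (1 / (K : ℝ)) * ∑ k, dt k / (ρ * (1 + δ * dt k)) →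
        (∀ n, 1 / (ρ * (1 + δt * d n)) =
            1 / (ρ * (1 + (1 / (K : ℝ)) *
              ∑ k, (d n * dt k) * (1 / (ρ * (1 + δ * dt k)))))) ∧
        (∀ k, 1 / (ρ * (1 + δ * dt k)) =
            1 / (ρ * (1 + (1 / (K : ℝ)) *
              ∑ n, (dt k * d n) * (1 / (ρ * (1 + δt * d n))))))) := by
  have hκ : (0 : ℝ) ≤ 1 / (K : ℝ) := by positivity
  refine ⟨existsUnique_resolventTrace_fixedPoint hκ hρ hd hdt, ?_⟩
  intro δ δt _ _ hδ hδt
  exact ⟨fun n => by rw [sum_mul_mul_one_div_eq, resolventTrace, ← hδt],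
    fun k => by rw [sum_mul_mul_one_div_eq, resolventTrace, ← hδ]⟩

/-- Separable case: the system of two equations
`δ = (1/K) tr (D (ρ (I_N + δ̃ D))⁻¹)`, `δ̃ = (1/K) tr (D̃ (ρ (I_K + δ D̃))⁻¹)`
(written with the diagonal matrices `D = diag d`, `D̃ = diag d̃`) admits a unique solution in
nonnegative reals; moreover for any such solution the matrices
`T(-ρ) = (1/ρ)(I + δ̃ D)⁻¹` and `T̃(-ρ) = (1/ρ)(I + δ D̃)⁻¹`, i.e. the diagonal entries
`t_n = 1/(ρ(1 + δ̃ d_n))` and `t̃_k = 1/(ρ(1 + δ d̃_k))`, satisfy the general deterministic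
system with `D_k = d̃_k D` and `D̃_n = d_n D̃`. -/
theorem stmt_4 (N K : ℕ) (hN : 0 < N) (hK : 0 < K) (ρ : ℝ) (hρ : 0 < ρ)
    (d : Fin N → ℝ) (dt : Fin K → ℝ)
    (hd : ∀ n, 0 ≤ d n) (hdt : ∀ k, 0 ≤ dt k) :
    (∃! q : ℝ × ℝ, (0 ≤ q.1 ∧ 0 ≤ q.2) ∧
        q.1 = (1 / (K : ℝ)) * ∑ n, d n / (ρ * (1 + q.2 * d n)) ∧
        q.2 = (1 / (K : ℝ)) * ∑ k, dt k / (ρ * (1 + q.1 * dt k))) ∧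
    (∀ δ δt : ℝ, 0 ≤ δ → 0 ≤ δt →
        δ = (1 / (K : ℝ)) * ∑ n, d n / (ρ * (1 + δt * d n)) →
        δt = (1 / (K : ℝ)) * ∑ k, dt k / (ρ * (1 + δ * dt k)) →
        (∀ n, 1 / (ρ * (1 + δt * d n)) =
            1 / (ρ * (1 + (1 / (K : ℝ)) *
              ∑ k, (d n * dt k) * (1 / (ρ * (1 + δ * dt k)))))) ∧
        (∀ k, 1 / (ρ * (1 + δ * dt k)) =
            1 / (ρ * (1 + (1 / (K : ℝ)) *
              ∑ n, (dt k * d n) * (1 / (ρ * (1 + δt * d n))))))) :=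
  stmt_4_general N K ρ hρ d dt hd hdt
end

section
/- Let ρ > 0, let d_1,…,d_N ≥ 0 and p_1,…,p_K ≥ 0 be given reals. Then the equation δ = (1/K) Σ_{n=1}^N d_n / ( ρ + (d_n/K) Σ_{k=1}^K p_k / (1 + p_k δ) ) has a unique nonnegative solution δ; moreover this solution equals the first component δ_K(ρ) of the unique nonnegative solution of the two-equation system δ = (1/K) tr( D ( ρ (I_N + δ̃ D) )^{-1} ), δ̃ = (1/K) tr( D̃ ( ρ (I_K + δ D̃) )^{-1} ) with D = diag(d_1,…,d_N), D̃ = diag(p_1,…,p_K). -/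
/-!
Write `F(δ) = (1/K) Σ_n d_n / (ρ + (d_n/K) S(δ))` with `S(δ) = Σ_k p_k / (1 + p_k δ)`.
`F` is continuous on `[0, ∞)` with `0 ≤ F ≤ (1/K) Σ_n d_n / ρ`, so it has a fixed point there.
Since `δ S(δ) = Σ_k p_k δ / (1 + p_k δ)` is nondecreasing, `δ ↦ F(δ) / δ` is strictly
decreasing as soon as `F` is not identically zero, so two fixed points `a < b` would give
`a F(b) < b F(a)`, i.e. `ab < ba`. For the two-equation system, the second equation says exactly
`(1/K) S(δ) = ρ δ̃`, which turns the first equation into the implicit one.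
-/

open Finset Function

section SelfConsistent

variable {ι κ : Type*} [Fintype ι] [Fintype κ]

noncomputable def resolventSum (p : κ → ℝ) (δ : ℝ) : ℝ :=
  ∑ k, p k / (1 + p k * δ)

noncomputable def selfConsistentMap (K ρ : ℝ) (d : ι → ℝ) (p : κ → ℝ) (δ : ℝ) : ℝ :=
  (1 / K) * ∑ n, d n / (ρ + d n / K * resolventSum p δ)

variable {K ρ : ℝ} {d : ι → ℝ} {p : κ → ℝ}

lemma resolventSum_nonneg (hp : ∀ k, 0 ≤ p k) {δ : ℝ} (hδ : 0 ≤ δ) :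
    0 ≤ resolventSum p δ :=
  sum_nonneg fun k _ => div_nonneg (hp k) (by have := hp k; positivity)

lemma monotoneOn_mul_resolventSum (hp : ∀ k, 0 ≤ p k) :
    MonotoneOn (fun δ => δ * resolventSum p δ) (Set.Ici 0) := by
  intro a (ha : 0 ≤ a) b (hb : 0 ≤ b) hab
  simp only [resolventSum, mul_sum]
  refine sum_le_sum fun k _ => ?_
  have hpk := hp k
  rw [mul_div_assoc', mul_div_assoc', div_le_div_iff₀ (by positivity) (by positivity)]
  nlinarith [mul_le_mul_of_nonneg_left hab hpk]

lemma continuousOn_resolventSum (hp : ∀ k, 0 ≤ p k) :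
    ContinuousOn (resolventSum p) (Set.Ici 0) := by
  refine continuousOn_finsetSum _ fun k _ => continuousOn_const.div (by fun_prop) ?_
  intro δ (hδ : 0 ≤ δ)
  have := hp k
  positivity

lemma selfConsistent_denom_pos (hK : 0 ≤ K) (hρ : 0 < ρ) {x : ℝ} (hx : 0 ≤ x)
    (hp : ∀ k, 0 ≤ p k) {δ : ℝ} (hδ : 0 ≤ δ) : 0 < ρ + x / K * resolventSum p δ := by
  have := resolventSum_nonneg hp hδ
  positivity

lemma selfConsistentMap_nonneg (hK : 0 ≤ K) (hρ : 0 < ρ) (hd : ∀ n, 0 ≤ d n)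
    (hp : ∀ k, 0 ≤ p k) {δ : ℝ} (hδ : 0 ≤ δ) : 0 ≤ selfConsistentMap K ρ d p δ :=
  mul_nonneg (by positivity) <| sum_nonneg fun n _ =>
    div_nonneg (hd n) (selfConsistent_denom_pos hK hρ (hd n) hp hδ).le

lemma selfConsistentMap_le (hK : 0 ≤ K) (hρ : 0 < ρ) (hd : ∀ n, 0 ≤ d n)
    (hp : ∀ k, 0 ≤ p k) {δ : ℝ} (hδ : 0 ≤ δ) :
    selfConsistentMap K ρ d p δ ≤ (1 / K) * ∑ n, d n / ρ := by
  refine mul_le_mul_of_nonneg_left (sum_le_sum fun n _ => ?_) (by positivity)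
  have := resolventSum_nonneg hp hδ
  have := hd n
  exact div_le_div_of_nonneg_left (hd n) hρ (le_add_of_nonneg_right (by positivity))

lemma continuousOn_selfConsistentMap (hK : 0 ≤ K) (hρ : 0 < ρ) (hd : ∀ n, 0 ≤ d n)
    (hp : ∀ k, 0 ≤ p k) : ContinuousOn (selfConsistentMap K ρ d p) (Set.Ici 0) :=
  continuousOn_const.mul <| continuousOn_finsetSum _ fun n _ =>
    continuousOn_const.div (continuousOn_const.add
      (continuousOn_const.mul (continuousOn_resolventSum hp)))
      fun _ hδ => (selfConsistent_denom_pos hK hρ (hd n) hp hδ).ne'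

lemma exists_isFixedPt_selfConsistentMap (hK : 0 ≤ K) (hρ : 0 < ρ) (hd : ∀ n, 0 ≤ d n)
    (hp : ∀ k, 0 ≤ p k) : ∃ δ, 0 ≤ δ ∧ IsFixedPt (selfConsistentMap K ρ d p) δ := by
  have hM : 0 ≤ (1 / K) * ∑ n, d n / ρ :=
    mul_nonneg (by positivity) (sum_nonneg fun n _ => div_nonneg (hd n) hρ.le)
  obtain ⟨δ, hδ, hfix⟩ := exists_mem_Icc_isFixedPt
    ((continuousOn_selfConsistentMap hK hρ hd hp).mono fun _ h => h.1) hM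
    (selfConsistentMap_nonneg hK hρ hd hp le_rfl) (selfConsistentMap_le hK hρ hd hp hM)
  exact ⟨δ, hδ.1, hfix⟩

lemma mul_selfConsistent_term_lt (hK : 0 ≤ K) (hρ : 0 < ρ) (hp : ∀ k, 0 ≤ p k) {x : ℝ}
    (hx : 0 < x) {a b : ℝ} (ha : 0 ≤ a) (hab : a < b) :
    a * (x / (ρ + x / K * resolventSum p b)) < b * (x / (ρ + x / K * resolventSum p a)) := by
  have hb : 0 ≤ b := ha.trans hab.le
  have hmono : a * resolventSum p a ≤ b * resolventSum p b :=
    monotoneOn_mul_resolventSum hp ha hb hab.le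
  rw [mul_div_assoc', mul_div_assoc', div_lt_div_iff₀
    (selfConsistent_denom_pos hK hρ hx.le hp hb) (selfConsistent_denom_pos hK hρ hx.le hp ha)]
  have hxK : 0 ≤ x * (x / K) := by positivity
  nlinarith [mul_le_mul_of_nonneg_left hmono hxK, mul_lt_mul_of_pos_right hab (mul_pos hx hρ)]

lemma mul_selfConsistentMap_lt (hK : 0 < K) (hρ : 0 < ρ) (hd : ∀ n, 0 ≤ d n)
    (hp : ∀ k, 0 ≤ p k) {n₀ : ι} (hn₀ : 0 < d n₀) {a b : ℝ} (ha : 0 ≤ a) (hab : a < b) :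
    a * selfConsistentMap K ρ d p b < b * selfConsistentMap K ρ d p a := by
  have hterm := fun n (hn : 0 < d n) => mul_selfConsistent_term_lt hK.le hρ hp hn ha hab
  rw [selfConsistentMap, selfConsistentMap, mul_left_comm a, mul_left_comm b]
  refine mul_lt_mul_of_pos_left ?_ (one_div_pos.mpr hK)
  rw [mul_sum, mul_sum]
  refine sum_lt_sum (fun n _ => ?_) ⟨n₀, mem_univ _, hterm n₀ hn₀⟩
  rcases (hd n).eq_or_lt with hn | hn
  · simp [← hn]
  · exact (hterm n hn).le

lemma pos_of_selfConsistentMap_pos (hK : 0 ≤ K) (hρ : 0 < ρ) (hd : ∀ n, 0 ≤ d n)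
    (hp : ∀ k, 0 ≤ p k) {δ : ℝ} (hδ : 0 ≤ δ) (hpos : 0 < selfConsistentMap K ρ d p δ) :
    0 < K ∧ ∃ n, 0 < d n := by
  have hsum : 0 ≤ ∑ n, d n / (ρ + d n / K * resolventSum p δ) :=
    sum_nonneg fun n _ => div_nonneg (hd n) (selfConsistent_denom_pos hK hρ (hd n) hp hδ).le
  refine ⟨one_div_pos.mp (pos_of_mul_pos_left hpos hsum), ?_⟩
  obtain ⟨n, -, hn⟩ := exists_lt_of_sum_lt ((sum_const_zero).trans_lt
    (pos_of_mul_pos_right hpos (by positivity)))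
  exact ⟨n, (hd n).lt_of_ne fun h => by simp [← h] at hn⟩

lemma eq_of_isFixedPt_selfConsistentMap (hK : 0 ≤ K) (hρ : 0 < ρ) (hd : ∀ n, 0 ≤ d n)
    (hp : ∀ k, 0 ≤ p k) {a b : ℝ} (ha : 0 ≤ a) (hb : 0 ≤ b)
    (hfa : IsFixedPt (selfConsistentMap K ρ d p) a)
    (hfb : IsFixedPt (selfConsistentMap K ρ d p) b) : a = b := by
  wlog hab : a < b generalizing a b
  · rcases (not_lt.mp hab).eq_or_lt with h | h
    · exact h.symm
    · exact (this hb ha hfb hfa h).symm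
  obtain ⟨hK, n₀, hn₀⟩ :=
    pos_of_selfConsistentMap_pos hK hρ hd hp hb (hfb.symm ▸ ha.trans_lt hab)
  have := mul_selfConsistentMap_lt hK hρ hd hp hn₀ ha hab
  rw [hfa.eq, hfb.eq, mul_comm] at this
  exact (lt_irrefl _ this).elim

lemma one_div_mul_resolventSum_eq (hρ : ρ ≠ 0) {δ δt : ℝ}
    (hδt : δt = (1 / K) * ∑ k, p k / (ρ * (1 + δ * p k))) :
    (1 / K) * resolventSum p δ = ρ * δt := by
  rw [hδt, mul_left_comm, mul_sum, resolventSum]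
  congr 1
  refine sum_congr rfl fun k _ => ?_
  rw [mul_div_assoc', mul_div_mul_left _ _ hρ, mul_comm δ]

lemma selfConsistentMap_eq_of_dual (hρ : ρ ≠ 0) {δ δt : ℝ}
    (hδt : δt = (1 / K) * ∑ k, p k / (ρ * (1 + δ * p k))) :
    selfConsistentMap K ρ d p δ = (1 / K) * ∑ n, d n / (ρ * (1 + δt * d n)) := by
  have h := one_div_mul_resolventSum_eq (p := p) hρ hδt
  refine congrArg _ (sum_congr rfl fun n _ => ?_)
  rw [div_eq_mul_one_div (d n) K, mul_assoc, h]
  ring_nf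

end SelfConsistent

theorem stmt_6_general (N K : ℕ) (ρ : ℝ) (hρ : 0 < ρ)
    (d : Fin N → ℝ) (p : Fin K → ℝ)
    (hd : ∀ n, 0 ≤ d n) (hp : ∀ k, 0 ≤ p k) :
    (∃! δ : ℝ, 0 ≤ δ ∧
        δ = (1 / (K : ℝ)) *
          ∑ n, d n / (ρ + (d n / (K : ℝ)) * ∑ k, p k / (1 + p k * δ))) ∧
    (∀ δ δt : ℝ, 0 ≤ δ → 0 ≤ δt →
        δ = (1 / (K : ℝ)) * ∑ n, d n / (ρ * (1 + δt * d n)) →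
        δt = (1 / (K : ℝ)) * ∑ k, p k / (ρ * (1 + δ * p k)) →
        δ = (1 / (K : ℝ)) *
          ∑ n, d n / (ρ + (d n / (K : ℝ)) * ∑ k, p k / (1 + p k * δ))) := by
  have hK : (0 : ℝ) ≤ K := K.cast_nonneg
  refine ⟨?_, fun δ δt _ _ hδ hδt => hδ.trans (selfConsistentMap_eq_of_dual hρ.ne' hδt).symm⟩
  show ∃! δ : ℝ, 0 ≤ δ ∧ δ = selfConsistentMap (K : ℝ) ρ d p δ
  obtain ⟨δ, hδ, hfix⟩ := exists_isFixedPt_selfConsistentMap hK hρ hd hp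
  exact ⟨δ, ⟨hδ, hfix.symm⟩, fun y ⟨hy, hfy⟩ =>
    eq_of_isFixedPt_selfConsistentMap hK hρ hd hp hy hδ hfy.symm hfix⟩

/-- The implicit equation
`δ = (1/K) Σ_n d_n / (ρ + (d_n/K) Σ_k p_k/(1 + p_k δ))`
has a unique nonnegative solution; moreover any nonnegative solution `(δ, δ̃)` of the
separable two-equation system
`δ = (1/K) tr (D (ρ (I + δ̃ D))⁻¹)`, `δ̃ = (1/K) tr (D̃ (ρ (I + δ D̃))⁻¹)`
(with `D = diag d`, `D̃ = diag p`) has its first component satisfying this implicit equation,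
hence equal to the unique solution. -/
theorem stmt_6 (N K : ℕ) (hN : 0 < N) (hK : 0 < K) (ρ : ℝ) (hρ : 0 < ρ)
    (d : Fin N → ℝ) (p : Fin K → ℝ)
    (hd : ∀ n, 0 ≤ d n) (hp : ∀ k, 0 ≤ p k) :
    (∃! δ : ℝ, 0 ≤ δ ∧
        δ = (1 / (K : ℝ)) *
          ∑ n, d n / (ρ + (d n / (K : ℝ)) * ∑ k, p k / (1 + p k * δ))) ∧
    (∀ δ δt : ℝ, 0 ≤ δ → 0 ≤ δt →
        δ = (1 / (K : ℝ)) * ∑ n, d n / (ρ * (1 + δt * d n)) →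
        δt = (1 / (K : ℝ)) * ∑ k, p k / (ρ * (1 + δ * p k)) →
        δ = (1 / (K : ℝ)) *
          ∑ n, d n / (ρ + (d n / (K : ℝ)) * ∑ k, p k / (1 + p k * δ))) :=
  stmt_6_general N K ρ hρ d p hd hp
end

section
/- Assume (A2), (A3) and (A4). Let A_K be the K×K matrix with entries [A_K]_{ℓm} = (1/K) · ( (1/K) tr( D_ℓ D_m T(−ρ)² ) ) / ( 1 + (1/K) tr( D_ℓ T(−ρ) ) )², let Δ_K = diag( (1 + (1/K) tr( D_ℓ T(−ρ) ))² ; 1 ≤ ℓ ≤ K ), and let g_K be the K×1 vector with entries (1/K) tr( D₀ D_k T(−ρ)² ), 1 ≤ k ≤ K. Then I_K − A_K is invertible, so the sequence Θ_K² = (1/K) g_Kᵀ (I_K − A_K)^{-1} Δ_K^{-1} g_K + ( E|W_{10}|⁴ − 1 ) (1/K) tr( D₀² T(−ρ)² ) is well defined, and it satisfies 0 < liminf_K Θ_K² ≤ limsup_K Θ_K² < ∞. -/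
/-!
The matrix `A_K` is entrywise nonnegative, and the fixed-point equations give `A_K t̃ ≤ θ t̃` with
`θ = σ_max² / (ρ + σ_max²) < 1`, because `(1/K) tr(D̃_n T̃) = 1/(ρ t_n) - 1` and
`t_n ≥ 1/(ρ + σ_max²)`. Hence the Neumann series of `A_K` converges, and `(I - A_K)⁻¹ = ∑ A_Kᵖ`
is entrywise nonnegative, has diagonal at least `1` and `t̃`-weighted row sums at most
`t̃ / (1 - θ)`. As `Δ_K⁻¹ = diag((ρ t̃_ℓ)²)` and the entries of `g_K` are bounded, this bounds
`Θ_K²` from above. From below, keeping only the diagonal of `(I - A_K)⁻¹` gives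
`Θ_K² ≥ c ((1/K) ∑ g_k)² + (E|W|⁴ - 1) (1/K) tr(D₀² T²)` with `E|W|⁴ ≥ 1`, and under (A4) one of
the two terms stays bounded away from zero, the second one by (A3) and Cauchy–Schwarz.
-/

open MeasureTheory ProbabilityTheory Matrix Filter Finset

lemma one_le_integral_norm_pow_four {Ω : Type*} [MeasurableSpace Ω] {μ : Measure Ω}
    [IsProbabilityMeasure μ] {W : Ω → ℂ} (hW2 : ∫ ω, ‖W ω‖ ^ 2 ∂μ = 1)
    (hW4 : Integrable (fun ω => ‖W ω‖ ^ 4) μ) : 1 ≤ ∫ ω, ‖W ω‖ ^ 4 ∂μ := by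
  have hX : Integrable (fun ω => ‖W ω‖ ^ 2) μ := .of_integral_ne_zero (by rw [hW2]; norm_num)
  have hX2 : MemLp (fun ω => ‖W ω‖ ^ 2) 2 μ :=
    (memLp_two_iff_integrable_sq hX.aestronglyMeasurable).mpr (by simpa [← pow_mul] using hW4)
  have := variance_nonneg (fun ω => ‖W ω‖ ^ 2) μ
  rw [variance_eq_sub hX2] at this
  simpa [← pow_mul, hW2] using this

namespace Matrix

variable {ι : Type*} [Fintype ι] {A : Matrix ι ι ℝ} {w : ι → ℝ} {θ : ℝ}

lemma mulVec_nonneg_of_nonneg (hA : ∀ i j, 0 ≤ A i j) {v : ι → ℝ} (hv : 0 ≤ v) :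
    0 ≤ A *ᵥ v := fun i =>
  dotProduct_nonneg_of_nonneg (hA i) hv

lemma mulVec_mono_of_nonneg (hA : ∀ i j, 0 ≤ A i j) {v v' : ι → ℝ} (h : v ≤ v') :
    A *ᵥ v ≤ A *ᵥ v' := fun i =>
  dotProduct_le_dotProduct_of_nonneg_left h (hA i)

lemma le_mulVec_of_one_le_diag (hA : ∀ i j, 0 ≤ A i j) (hA1 : ∀ i, 1 ≤ A i i) {v : ι → ℝ}
    (hv : 0 ≤ v) : v ≤ A *ᵥ v := fun i =>
  calc v i ≤ A i i * v i := le_mul_of_one_le_left (hv i) (hA1 i)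
    _ ≤ (A *ᵥ v) i := single_le_sum (f := fun j => A i j * v j)
          (fun j _ => mul_nonneg (hA i j) (hv j)) (mem_univ i)

variable [DecidableEq ι]

lemma pow_mulVec_le (hA : ∀ i j, 0 ≤ A i j) (hθ : 0 ≤ θ) (hAw : A *ᵥ w ≤ θ • w) (p : ℕ) :
    A ^ p *ᵥ w ≤ θ ^ p • w := by
  induction p with
  | zero => simp
  | succ p ih =>
    calc A ^ (p + 1) *ᵥ w = A *ᵥ (A ^ p *ᵥ w) := by rw [pow_succ', mulVec_mulVec]
      _ ≤ A *ᵥ (θ ^ p • w) := mulVec_mono_of_nonneg hA ih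
      _ = θ ^ p • (A *ᵥ w) := mulVec_smul _ _ _
      _ ≤ θ ^ p • (θ • w) := smul_le_smul_of_nonneg_left hAw (pow_nonneg hθ p)
      _ = θ ^ (p + 1) • w := by rw [smul_smul, pow_succ]

section Neumann

variable (hA : ∀ i j, 0 ≤ A i j) (hw : ∀ i, 0 < w i) (hθ0 : 0 ≤ θ) (hAw : A *ᵥ w ≤ θ • w)
include hA hw hθ0 hAw

lemma pow_apply_le_of_mulVec_le (p : ℕ) (i j : ι) : (A ^ p) i j ≤ θ ^ p * w i / w j := by
  rw [le_div_iff₀ (hw j)]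
  calc (A ^ p) i j * w j ≤ (A ^ p *ᵥ w) i :=
        single_le_sum (f := fun k => (A ^ p) i k * w k)
          (fun k _ => mul_nonneg (pow_apply_nonneg hA p i k) (hw k).le) (mem_univ j)
    _ ≤ θ ^ p * w i := pow_mulVec_le hA hθ0 hAw p i

variable (hθ1 : θ < 1)
include hθ1

lemma summable_pow_of_mulVec_le : Summable (A ^ ·) := by
  refine Pi.summable.mpr fun i => Pi.summable.mpr fun j => ?_
  refine Summable.of_nonneg_of_le (fun p => pow_apply_nonneg hA p i j)
    (fun p => pow_apply_le_of_mulVec_le hA hw hθ0 hAw p i j) ?_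
  simp_rw [mul_div_assoc]
  exact (summable_geometric_of_lt_one hθ0 hθ1).mul_right _

lemma isUnit_one_sub_of_mulVec_le : IsUnit (1 - A) :=
  (isUnit_iff_isUnit_det _).mpr <| isUnit_det_of_left_inverse
    (summable_pow_of_mulVec_le hA hw hθ0 hAw hθ1).tsum_pow_mul_one_sub

lemma hasSum_pow_apply_inv_one_sub_apply (i j : ι) :
    HasSum (fun p => (A ^ p) i j) ((1 - A)⁻¹ i j) := by
  have hS := summable_pow_of_mulVec_le hA hw hθ0 hAw hθ1
  rw [inv_eq_left_inv hS.tsum_pow_mul_one_sub]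
  exact Pi.hasSum.mp (Pi.hasSum.mp hS.hasSum i) j

lemma inv_one_sub_apply_nonneg (i j : ι) : 0 ≤ (1 - A)⁻¹ i j :=
  (hasSum_pow_apply_inv_one_sub_apply hA hw hθ0 hAw hθ1 i j).nonneg
    fun p => pow_apply_nonneg hA p i j

lemma one_le_inv_one_sub_apply_self (i : ι) : 1 ≤ (1 - A)⁻¹ i i := by
  simpa using le_hasSum (hasSum_pow_apply_inv_one_sub_apply hA hw hθ0 hAw hθ1 i i) 0
    fun p _ => pow_apply_nonneg hA p i i

lemma inv_one_sub_mulVec_le : (1 - A)⁻¹ *ᵥ w ≤ (1 - θ)⁻¹ • w := by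
  intro i
  have h : HasSum (fun p => (A ^ p *ᵥ w) i) (((1 - A)⁻¹ *ᵥ w) i) :=
    hasSum_sum fun j _ => (hasSum_pow_apply_inv_one_sub_apply hA hw hθ0 hAw hθ1 i j).mul_right _
  exact hasSum_le (fun p => pow_mulVec_le hA hθ0 hAw p i) h
    ((hasSum_geometric_of_lt_one hθ0 hθ1).mul_right (w i))

end Neumann

end Matrix

namespace SINR

variable {N K : ℕ}

lemma avg_le_mul_of_le {M : ℕ} {f : Fin M → ℝ} {B r : ℝ} (hf : ∀ i, f i ≤ B) (hB : 0 ≤ B)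
    (hMK : (M : ℝ) / K ≤ r) : (1 / (K : ℝ)) * ∑ i, f i ≤ r * B := by
  calc (1 / (K : ℝ)) * ∑ i, f i ≤ (1 / (K : ℝ)) * ∑ _i : Fin M, B := by
        gcongr with i; exact hf i
    _ = (M : ℝ) / K * B := by simp; ring
    _ ≤ r * B := by gcongr

lemma avg_le_of_le {f : Fin K → ℝ} {B : ℝ} (hf : ∀ i, f i ≤ B) (hB : 0 ≤ B) :
    (1 / (K : ℝ)) * ∑ i, f i ≤ B := by
  simpa using avg_le_mul_of_le (r := 1) hf hB (div_self_le_one _)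

lemma sq_avg_le_avg_sq (f : Fin K → ℝ) :
    ((1 / (K : ℝ)) * ∑ k, f k) ^ 2 ≤ (1 / (K : ℝ)) * ∑ k, f k ^ 2 := by
  simpa [div_eq_inv_mul] using sum_div_card_sq_le_sum_sq_div_card (s := univ) (f := f)

lemma mul_sq_le_avg_sq {f : Fin N → ℝ} {a c : ℝ} (ha : 0 < a) (haKN : a ≤ K / N) (hc : 0 ≤ c)
    (hf : c ≤ (1 / (K : ℝ)) * ∑ n, f n) : a * c ^ 2 ≤ (1 / (K : ℝ)) * ∑ n, f n ^ 2 := by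
  have hKN : 0 < (K : ℝ) / N := ha.trans_le haKN
  have hN : 0 < (N : ℝ) := Nat.cast_pos.mpr (Nat.pos_of_ne_zero fun h0 => by simp [h0] at hKN)
  have hK : 0 < (K : ℝ) := by simpa [hN] using (div_pos_iff_of_pos_right hN).mp hKN
  have hcheb := sum_div_card_sq_le_sum_sq_div_card (s := univ) (f := f)
  rw [card_univ, Fintype.card_fin] at hcheb
  calc a * c ^ 2 ≤ K / N * ((1 / (K : ℝ)) * ∑ n, f n) ^ 2 := by gcongr
    _ = N / K * ((∑ n, f n) / N) ^ 2 := by field_simp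
    _ ≤ N / K * ((∑ n, f n ^ 2) / N) := by gcongr
    _ = (1 / (K : ℝ)) * ∑ n, f n ^ 2 := by field_simp

section FixedPoint

variable {ρ x S : ℝ} (hρ : 0 < ρ) (hS : 0 ≤ S) (hx : x = 1 / (ρ * (1 + S)))
include hρ hS hx

lemma one_add_eq_one_div_of_eq : 1 + S = 1 / (ρ * x) := by
  rw [hx]; field_simp

lemma le_one_div_of_eq : x ≤ 1 / ρ := by
  rw [hx]; gcongr; nlinarith

lemma one_div_add_le_of_eq {B : ℝ} (hSB : S ≤ B / ρ) : 1 / (ρ + B) ≤ x := by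
  rw [hx]
  gcongr
  calc ρ * (1 + S) ≤ ρ * (1 + B / ρ) := by gcongr
    _ = ρ + B := by field_simp

end FixedPoint

/-- The positive solution `(T(-ρ), T̃(-ρ))` of the deterministic system, written for the
profile `d n k = σ²_{n,k+1}`: column `0` of the variance profile does not enter it. -/
structure IsPosSolution (ρ : ℝ) (d : Fin N → Fin K → ℝ) (t : Fin N → ℝ) (tt : Fin K → ℝ) :
    Prop where
  t_pos : ∀ n, 0 < t n
  tt_pos : ∀ k, 0 < tt k
  t_eq : ∀ n, t n = 1 / (ρ * (1 + (1 / (K : ℝ)) * ∑ k, d n k * tt k))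
  tt_eq : ∀ k, tt k = 1 / (ρ * (1 + (1 / (K : ℝ)) * ∑ n, d n k * t n))

/-! `fluctMatrix`, `deltaMatrix` and `crossVec` are `A_K`, `Δ_K` and `g_K`, with `σ₀ n = σ_{n0}`. -/

noncomputable def fluctMatrix (d : Fin N → Fin K → ℝ) (t : Fin N → ℝ) : Matrix (Fin K) (Fin K) ℝ :=
  Matrix.of fun ℓ m => (1 / (K : ℝ)) * ((1 / (K : ℝ)) * ∑ n, d n ℓ * d n m * t n ^ 2) /
    (1 + (1 / (K : ℝ)) * ∑ n, d n ℓ * t n) ^ 2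

noncomputable def deltaMatrix (d : Fin N → Fin K → ℝ) (t : Fin N → ℝ) : Matrix (Fin K) (Fin K) ℝ :=
  diagonal fun ℓ => (1 + (1 / (K : ℝ)) * ∑ n, d n ℓ * t n) ^ 2

noncomputable def crossVec (σ₀ : Fin N → ℝ) (d : Fin N → Fin K → ℝ) (t : Fin N → ℝ) :
    Fin K → ℝ :=
  fun k => (1 / (K : ℝ)) * ∑ n, σ₀ n ^ 2 * d n k * t n ^ 2

noncomputable def quadTerm (σ₀ : Fin N → ℝ) (d : Fin N → Fin K → ℝ) (t : Fin N → ℝ) : ℝ :=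
  (1 / (K : ℝ)) * crossVec σ₀ d t ⬝ᵥ
    (((1 - fluctMatrix d t)⁻¹ * (deltaMatrix d t)⁻¹) *ᵥ crossVec σ₀ d t)

lemma crossVec_nonneg {σ₀ : Fin N → ℝ} {d : Fin N → Fin K → ℝ} (hd : ∀ n k, 0 ≤ d n k)
    (t : Fin N → ℝ) : 0 ≤ crossVec σ₀ d t := fun k =>
  mul_nonneg (by positivity) (sum_nonneg fun n _ =>
    mul_nonneg (mul_nonneg (sq_nonneg _) (hd n k)) (sq_nonneg _))

namespace IsPosSolution

variable {ρ s r : ℝ} {σ₀ : Fin N → ℝ} {d : Fin N → Fin K → ℝ} {t : Fin N → ℝ} {tt : Fin K → ℝ}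
  (h : IsPosSolution ρ d t tt) (hd : ∀ n k, 0 ≤ d n k)
include h hd

lemma avg_t_nonneg (k : Fin K) : 0 ≤ (1 / (K : ℝ)) * ∑ n, d n k * t n :=
  mul_nonneg (by positivity) (sum_nonneg fun n _ => mul_nonneg (hd n k) (h.t_pos n).le)

lemma avg_tt_nonneg (n : Fin N) : 0 ≤ (1 / (K : ℝ)) * ∑ k, d n k * tt k :=
  mul_nonneg (by positivity) (sum_nonneg fun k _ => mul_nonneg (hd n k) (h.tt_pos k).le)

variable (hρ : 0 < ρ)
include hρ

lemma t_le (n : Fin N) : t n ≤ 1 / ρ :=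
  le_one_div_of_eq hρ (h.avg_tt_nonneg hd n) (h.t_eq n)

lemma tt_le (k : Fin K) : tt k ≤ 1 / ρ :=
  le_one_div_of_eq hρ (h.avg_t_nonneg hd k) (h.tt_eq k)

lemma one_add_avg_t_eq (k : Fin K) : 1 + (1 / (K : ℝ)) * ∑ n, d n k * t n = 1 / (ρ * tt k) :=
  one_add_eq_one_div_of_eq hρ (h.avg_t_nonneg hd k) (h.tt_eq k)

lemma avg_tt_eq (n : Fin N) : (1 / (K : ℝ)) * ∑ k, d n k * tt k = 1 / (ρ * t n) - 1 := by
  rw [← one_add_eq_one_div_of_eq hρ (h.avg_tt_nonneg hd n) (h.t_eq n)]; ring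

lemma mul_tt_le_one (k : Fin K) : ρ * tt k ≤ 1 :=
  (le_div_iff₀' hρ).mp (h.tt_le hd hρ k)

lemma fluctMatrix_apply (ℓ m : Fin K) : fluctMatrix d t ℓ m =
    (ρ * tt ℓ) ^ 2 * ((1 / (K : ℝ)) * ((1 / (K : ℝ)) * ∑ n, d n ℓ * d n m * t n ^ 2)) := by
  have := h.tt_pos ℓ
  rw [fluctMatrix, of_apply, h.one_add_avg_t_eq hd hρ ℓ]
  field_simp

lemma fluctMatrix_nonneg (ℓ m : Fin K) : 0 ≤ fluctMatrix d t ℓ m := by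
  rw [h.fluctMatrix_apply hd hρ]
  have : 0 ≤ ∑ n, d n ℓ * d n m * t n ^ 2 :=
    sum_nonneg fun n _ => mul_nonneg (mul_nonneg (hd n ℓ) (hd n m)) (sq_nonneg _)
  positivity

lemma inv_deltaMatrix : (deltaMatrix d t)⁻¹ = diagonal fun ℓ => (ρ * tt ℓ) ^ 2 := by
  refine inv_eq_left_inv ?_
  rw [deltaMatrix, diagonal_mul_diagonal, ← diagonal_one]
  congr 1
  ext ℓ
  have := h.tt_pos ℓ
  rw [h.one_add_avg_t_eq hd hρ ℓ]
  field_simp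

lemma mul_inv_deltaMatrix_mulVec (C : Matrix (Fin K) (Fin K) ℝ) :
    (C * (deltaMatrix d t)⁻¹) *ᵥ crossVec σ₀ d t =
      C *ᵥ fun ℓ => (ρ * tt ℓ) ^ 2 * crossVec σ₀ d t ℓ := by
  rw [← mulVec_mulVec, h.inv_deltaMatrix hd hρ]
  congr 1
  ext ℓ
  exact mulVec_diagonal _ _ ℓ

lemma avg_fourth_le (hσ₀ : ∀ n, σ₀ n ^ 2 ≤ s) (hNK : (N : ℝ) / K ≤ r) :
    (1 / (K : ℝ)) * ∑ n, σ₀ n ^ 4 * t n ^ 2 ≤ r * (s * s * (1 / ρ) ^ 2) := by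
  refine avg_le_mul_of_le (fun n => ?_) (mul_nonneg (mul_self_nonneg s) (sq_nonneg _)) hNK
  have hs : 0 ≤ s := (sq_nonneg _).trans (hσ₀ n)
  have ht := pow_le_pow_left₀ (h.t_pos n).le (h.t_le hd hρ n) 2
  calc σ₀ n ^ 4 * t n ^ 2 = σ₀ n ^ 2 * σ₀ n ^ 2 * t n ^ 2 := by ring
    _ ≤ s * s * (1 / ρ) ^ 2 :=
        mul_le_mul (mul_le_mul (hσ₀ n) (hσ₀ n) (sq_nonneg _) hs) ht (sq_nonneg _) (by positivity)

variable (hds : ∀ n k, d n k ≤ s) (hs : 0 ≤ s)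
include hds hs

lemma one_div_add_le_t (n : Fin N) : 1 / (ρ + s) ≤ t n := by
  refine one_div_add_le_of_eq hρ (h.avg_tt_nonneg hd n) (h.t_eq n) ?_
  refine (avg_le_of_le (fun k => ?_) (by positivity)).trans_eq (mul_one_div s ρ)
  exact mul_le_mul (hds n k) (h.tt_le hd hρ k) (h.tt_pos k).le hs

lemma one_div_add_le_tt (hNK : (N : ℝ) / K ≤ r) (k : Fin K) : 1 / (ρ + r * s) ≤ tt k := by
  refine one_div_add_le_of_eq hρ (h.avg_t_nonneg hd k) (h.tt_eq k) ?_
  refine (avg_le_mul_of_le (fun n => ?_) (by positivity) hNK).trans_eq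
    (by ring : r * (s * (1 / ρ)) = r * s / ρ)
  exact mul_le_mul (hds n k) (h.t_le hd hρ n) (h.t_pos n).le hs

lemma fluctMatrix_mulVec_le : fluctMatrix d t *ᵥ tt ≤ (s / (ρ + s)) • tt := by
  intro ℓ
  have hterm (n : Fin N) :
      d n ℓ * t n ^ 2 * (1 / (ρ * t n) - 1) ≤ s / (ρ * (ρ + s)) * (d n ℓ * t n) := by
    have ht := h.t_pos n
    have hdt : 0 ≤ d n ℓ * t n := mul_nonneg (hd n ℓ) ht.le
    calc d n ℓ * t n ^ 2 * (1 / (ρ * t n) - 1) = d n ℓ * t n * (1 / ρ - t n) := by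
          field_simp
      _ ≤ d n ℓ * t n * (1 / ρ - 1 / (ρ + s)) := by
          gcongr; exact h.one_div_add_le_t hd hρ hds hs n
      _ = s / (ρ * (ρ + s)) * (d n ℓ * t n) := by field_simp; ring
  have htt := h.tt_pos ℓ
  calc (fluctMatrix d t *ᵥ tt) ℓ
      = (ρ * tt ℓ) ^ 2 * ((1 / (K : ℝ)) *
          ∑ n, d n ℓ * t n ^ 2 * ((1 / (K : ℝ)) * ∑ m, d n m * tt m)) := by
        simp only [mulVec, dotProduct, h.fluctMatrix_apply hd hρ, mul_sum, sum_mul]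
        rw [sum_comm]
        exact sum_congr rfl fun n _ => sum_congr rfl fun m _ => by ring
    _ = (ρ * tt ℓ) ^ 2 * ((1 / (K : ℝ)) * ∑ n, d n ℓ * t n ^ 2 * (1 / (ρ * t n) - 1)) := by
        simp_rw [h.avg_tt_eq hd hρ]
    _ ≤ (ρ * tt ℓ) ^ 2 * ((1 / (K : ℝ)) * ∑ n, s / (ρ * (ρ + s)) * (d n ℓ * t n)) := by
        gcongr _ * (_ * ?_)
        exact sum_le_sum fun n _ => hterm n
    _ = s / (ρ + s) * tt ℓ *
          (ρ * tt ℓ * (1 + (1 / (K : ℝ)) * ∑ n, d n ℓ * t n) - ρ * tt ℓ) := by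
        rw [← mul_sum]; field_simp; ring
    _ = s / (ρ + s) * tt ℓ * (1 - ρ * tt ℓ) := by
        rw [h.one_add_avg_t_eq hd hρ ℓ]; field_simp
    _ ≤ s / (ρ + s) * tt ℓ := mul_le_of_le_one_right (by positivity) (sub_le_self 1 (by positivity))

lemma isUnit_one_sub_fluctMatrix : IsUnit (1 - fluctMatrix d t) :=
  isUnit_one_sub_of_mulVec_le (h.fluctMatrix_nonneg hd hρ) h.tt_pos (by positivity)
    (h.fluctMatrix_mulVec_le hd hρ hds hs) ((div_lt_one (by positivity)).mpr (by linarith))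

lemma inv_one_sub_fluctMatrix_apply_nonneg (ℓ m : Fin K) : 0 ≤ (1 - fluctMatrix d t)⁻¹ ℓ m :=
  inv_one_sub_apply_nonneg (h.fluctMatrix_nonneg hd hρ) h.tt_pos (by positivity)
    (h.fluctMatrix_mulVec_le hd hρ hds hs) ((div_lt_one (by positivity)).mpr (by linarith)) ℓ m

lemma one_le_inv_one_sub_fluctMatrix_apply_self (ℓ : Fin K) :
    1 ≤ (1 - fluctMatrix d t)⁻¹ ℓ ℓ :=
  one_le_inv_one_sub_apply_self (h.fluctMatrix_nonneg hd hρ) h.tt_pos (by positivity)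
    (h.fluctMatrix_mulVec_le hd hρ hds hs) ((div_lt_one (by positivity)).mpr (by linarith)) ℓ

lemma inv_one_sub_fluctMatrix_mulVec_le :
    (1 - fluctMatrix d t)⁻¹ *ᵥ tt ≤ (1 - s / (ρ + s))⁻¹ • tt :=
  inv_one_sub_mulVec_le (h.fluctMatrix_nonneg hd hρ) h.tt_pos (by positivity)
    (h.fluctMatrix_mulVec_le hd hρ hds hs) ((div_lt_one (by positivity)).mpr (by linarith))

lemma crossVec_le (hσ₀ : ∀ n, σ₀ n ^ 2 ≤ s) (hNK : (N : ℝ) / K ≤ r) (k : Fin K) :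
    crossVec σ₀ d t k ≤ r * (s * s * (1 / ρ) ^ 2) := by
  refine avg_le_mul_of_le (fun n => ?_) (mul_nonneg (mul_self_nonneg s) (sq_nonneg _)) hNK
  have ht := pow_le_pow_left₀ (h.t_pos n).le (h.t_le hd hρ n) 2
  exact mul_le_mul (mul_le_mul (hσ₀ n) (hds n k) (hd n k) hs) ht (sq_nonneg _) (by positivity)

lemma quadTerm_le (hσ₀ : ∀ n, σ₀ n ^ 2 ≤ s) (hNK : (N : ℝ) / K ≤ r) :
    quadTerm σ₀ d t ≤
      r * (s * s * (1 / ρ) ^ 2) * (r * (s * s * (1 / ρ) ^ 2) * (1 - s / (ρ + s))⁻¹) := by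
  set G := r * (s * s * (1 / ρ) ^ 2)
  have hG : 0 ≤ G := mul_nonneg ((by positivity : (0 : ℝ) ≤ N / K).trans hNK)
    (mul_nonneg (mul_self_nonneg s) (sq_nonneg _))
  have hθ : 0 < 1 - s / (ρ + s) := sub_pos.mpr ((div_lt_one (by positivity)).mpr (by linarith))
  have hC := h.inv_one_sub_fluctMatrix_apply_nonneg hd hρ hds hs
  have hg := crossVec_nonneg hd t (σ₀ := σ₀)
  have hgG := h.crossVec_le hd hρ hds hs hσ₀ hNK
  have hug : (fun ℓ => (ρ * tt ℓ) ^ 2 * crossVec σ₀ d t ℓ) ≤ (ρ * G) • tt := fun ℓ => by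
    have := h.tt_pos ℓ
    calc (ρ * tt ℓ) ^ 2 * crossVec σ₀ d t ℓ
        = ρ * tt ℓ * (ρ * tt ℓ) * crossVec σ₀ d t ℓ := by ring
      _ ≤ ρ * tt ℓ * 1 * G := by
        gcongr
        exacts [hg ℓ, h.mul_tt_le_one hd hρ ℓ, hgG ℓ]
      _ = ((ρ * G) • tt) ℓ := by simp only [Pi.smul_apply, smul_eq_mul]; ring
  have hrow (ℓ : Fin K) :
      ((1 - fluctMatrix d t)⁻¹ *ᵥ fun ℓ => (ρ * tt ℓ) ^ 2 * crossVec σ₀ d t ℓ) ℓ ≤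
        G * (1 - s / (ρ + s))⁻¹ :=
    calc _ ≤ ((1 - fluctMatrix d t)⁻¹ *ᵥ ((ρ * G) • tt)) ℓ := mulVec_mono_of_nonneg hC hug ℓ
      _ = ρ * G * ((1 - fluctMatrix d t)⁻¹ *ᵥ tt) ℓ := by rw [mulVec_smul]; rfl
      _ ≤ ρ * G * ((1 - s / (ρ + s))⁻¹ * tt ℓ) := by
          gcongr; exact h.inv_one_sub_fluctMatrix_mulVec_le hd hρ hds hs ℓ
      _ = G * (1 - s / (ρ + s))⁻¹ * (ρ * tt ℓ) := by ring
      _ ≤ G * (1 - s / (ρ + s))⁻¹ :=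
          mul_le_of_le_one_right (by positivity) (h.mul_tt_le_one hd hρ ℓ)
  rw [quadTerm, h.mul_inv_deltaMatrix_mulVec hd hρ]
  refine avg_le_of_le (fun ℓ => mul_le_mul (hgG ℓ) (hrow ℓ) ?_ hG) (by positivity)
  exact mulVec_nonneg_of_nonneg hC (fun m => mul_nonneg (sq_nonneg _) (hg m)) ℓ

lemma quadTerm_ge (hNK : (N : ℝ) / K ≤ r) :
    (ρ / (ρ + r * s)) ^ 2 * ((1 / (K : ℝ)) * ∑ k, crossVec σ₀ d t k) ^ 2 ≤ quadTerm σ₀ d t := by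
  have hr : 0 ≤ r := (by positivity : (0 : ℝ) ≤ N / K).trans hNK
  have hC := h.inv_one_sub_fluctMatrix_apply_nonneg hd hρ hds hs
  have hC1 := h.one_le_inv_one_sub_fluctMatrix_apply_self hd hρ hds hs
  have hg := crossVec_nonneg hd t (σ₀ := σ₀)
  set g := crossVec σ₀ d t
  have hug : (fun ℓ => (ρ / (ρ + r * s)) ^ 2 * g ℓ) ≤ fun ℓ => (ρ * tt ℓ) ^ 2 * g ℓ := fun ℓ => by
    have := h.one_div_add_le_tt hd hρ hds hs hNK ℓ
    have := hg ℓ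
    dsimp only
    gcongr
    calc ρ / (ρ + r * s) = ρ * (1 / (ρ + r * s)) := by ring
      _ ≤ ρ * tt ℓ := by gcongr
  rw [quadTerm, h.mul_inv_deltaMatrix_mulVec hd hρ]
  calc (ρ / (ρ + r * s)) ^ 2 * ((1 / (K : ℝ)) * ∑ k, g k) ^ 2
      ≤ (ρ / (ρ + r * s)) ^ 2 * ((1 / (K : ℝ)) * ∑ k, g k ^ 2) := by
        gcongr; exact sq_avg_le_avg_sq g
    _ = (1 / (K : ℝ)) * g ⬝ᵥ fun ℓ => (ρ / (ρ + r * s)) ^ 2 * g ℓ := by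
        simp only [dotProduct, mul_sum]
        exact sum_congr rfl fun ℓ _ => by ring
    _ ≤ (1 / (K : ℝ)) * g ⬝ᵥ fun ℓ => (ρ * tt ℓ) ^ 2 * g ℓ := by
        gcongr; exact dotProduct_le_dotProduct_of_nonneg_left hug hg
    _ ≤ _ := by
        gcongr
        exact dotProduct_le_dotProduct_of_nonneg_left
          (le_mulVec_of_one_le_diag hC hC1 fun ℓ => mul_nonneg (sq_nonneg _) (hg ℓ)) hg

lemma mul_le_avg_fourth {a c : ℝ} (ha : 0 < a) (haKN : a ≤ K / N) (hc : 0 ≤ c)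
    (hσc : c ≤ (1 / (K : ℝ)) * ∑ n, σ₀ n ^ 2) :
    a * c ^ 2 * (1 / (ρ + s)) ^ 2 ≤ (1 / (K : ℝ)) * ∑ n, σ₀ n ^ 4 * t n ^ 2 := by
  have hσ4 := mul_sq_le_avg_sq ha haKN hc hσc
  simp only [← pow_mul] at hσ4
  calc a * c ^ 2 * (1 / (ρ + s)) ^ 2
      ≤ (1 / (K : ℝ)) * ∑ n, σ₀ n ^ 4 * (1 / (ρ + s)) ^ 2 := by
        rw [← sum_mul, ← mul_assoc]; gcongr
    _ ≤ (1 / (K : ℝ)) * ∑ n, σ₀ n ^ 4 * t n ^ 2 := by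
        gcongr with n; exact h.one_div_add_le_t hd hρ hds hs n

lemma mul_le_avg_crossVec :
    (1 / (ρ + s)) ^ 2 * ((1 / (K : ℝ) ^ 2) * ∑ k, ∑ n, σ₀ n ^ 2 * d n k) ≤
      (1 / (K : ℝ)) * ∑ k, crossVec σ₀ d t k := by
  calc (1 / (ρ + s)) ^ 2 * ((1 / (K : ℝ) ^ 2) * ∑ k, ∑ n, σ₀ n ^ 2 * d n k)
      = (1 / (K : ℝ)) * ∑ k, (1 / (K : ℝ)) * ∑ n, σ₀ n ^ 2 * d n k * (1 / (ρ + s)) ^ 2 := by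
        simp only [mul_sum]
        exact sum_congr rfl fun k _ => sum_congr rfl fun n _ => by ring
    _ ≤ (1 / (K : ℝ)) * ∑ k, crossVec σ₀ d t k := by
        unfold crossVec
        gcongr with k _ n
        · exact mul_nonneg (sq_nonneg _) (hd n k)
        · exact h.one_div_add_le_t hd hρ hds hs n

lemma quadTerm_nonneg : 0 ≤ quadTerm σ₀ d t :=
  le_trans (by positivity) (h.quadTerm_ge hd hρ hds hs le_rfl)

lemma mul_sq_le_quadTerm {c : ℝ} (hNK : (N : ℝ) / K ≤ r) (hc : 0 ≤ c)
    (hcd : c ≤ (1 / (K : ℝ) ^ 2) * ∑ k, ∑ n, σ₀ n ^ 2 * d n k) :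
    (ρ / (ρ + r * s)) ^ 2 * ((1 / (ρ + s)) ^ 2 * c) ^ 2 ≤ quadTerm σ₀ d t := by
  refine le_trans ?_ (h.quadTerm_ge hd hρ hds hs hNK)
  gcongr _ * ?_ ^ 2
  exact (mul_le_mul_of_nonneg_left hcd (by positivity)).trans (h.mul_le_avg_crossVec hd hρ hds hs)

end IsPosSolution

end SINR

theorem stmt_7_general
    {Ω : Type} [MeasurableSpace Ω] (μ : Measure Ω) [IsProbabilityMeasure μ]
    (ρ : ℝ) (hρ : 0 < ρ)
    (N : ℕ → ℕ)
    (hratio_lb : ∃ c : ℝ, 0 < c ∧ ∀ᶠ (K : ℕ) in atTop, c ≤ (K : ℝ) / (N K : ℝ))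
    (σ : (K : ℕ) → Fin (N K) → Fin (K + 1) → ℝ)
    (hσ : ∀ K n k, 0 ≤ σ K n k)
    (σmax : ℝ) (hA2 : ∀ K n k, σ K n k ≤ σmax)
    -- the random variable `W_{10}`, with unit second moment and finite fourth moment
    (W : Ω → ℂ)
    (hWvar : ∫ ω, ‖W ω‖ ^ 2 ∂μ = 1)
    (hW4 : Integrable (fun ω => ‖W ω‖ ^ 4) μ)
    -- (A3)
    (hA3 : ∃ c : ℝ, 0 < c ∧ ∀ᶠ (K : ℕ) in atTop, ∀ k : Fin (K + 1),
      c ≤ (1 / (K : ℝ)) * ∑ n, (σ K n k) ^ 2)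
    -- (A4)
    (hA4 : 1 < ∫ ω, ‖W ω‖ ^ 4 ∂μ ∨
      ∃ c : ℝ, 0 < c ∧ ∀ᶠ (K : ℕ) in atTop,
        c ≤ (1 / (K : ℝ) ^ 2) * ∑ k : Fin K, ∑ n, (σ K n 0) ^ 2 * (σ K n k.succ) ^ 2)
    -- the positive solution of the deterministic system at `z = -ρ`
    (t : (K : ℕ) → Fin (N K) → ℝ) (tt : (K : ℕ) → Fin K → ℝ)
    (ht_pos : ∀ K n, 0 < t K n) (htt_pos : ∀ K k, 0 < tt K k)
    (ht_eq : ∀ K (n : Fin (N K)), t K n =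
      1 / (ρ * (1 + (1 / (K : ℝ)) * ∑ k : Fin K, (σ K n k.succ) ^ 2 * tt K k)))
    (htt_eq : ∀ K (k : Fin K), tt K k =
      1 / (ρ * (1 + (1 / (K : ℝ)) * ∑ n, (σ K n k.succ) ^ 2 * t K n))) :
    let A : (K : ℕ) → Matrix (Fin K) (Fin K) ℝ := fun K => Matrix.of fun ℓ m =>
      (1 / (K : ℝ)) *
        ((1 / (K : ℝ)) * ∑ n, (σ K n ℓ.succ) ^ 2 * (σ K n m.succ) ^ 2 * (t K n) ^ 2) /
        (1 + (1 / (K : ℝ)) * ∑ n, (σ K n ℓ.succ) ^ 2 * t K n) ^ 2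
    let Δ : (K : ℕ) → Matrix (Fin K) (Fin K) ℝ := fun K => Matrix.diagonal fun ℓ =>
      (1 + (1 / (K : ℝ)) * ∑ n, (σ K n ℓ.succ) ^ 2 * t K n) ^ 2
    let g : (K : ℕ) → Fin K → ℝ := fun K k =>
      (1 / (K : ℝ)) * ∑ n, (σ K n 0) ^ 2 * (σ K n k.succ) ^ 2 * (t K n) ^ 2
    let Θsq : ℕ → ℝ := fun K =>
      (1 / (K : ℝ)) * dotProduct (g K) (((1 - A K)⁻¹ * (Δ K)⁻¹).mulVec (g K))
        + ((∫ ω, ‖W ω‖ ^ 4 ∂μ) - 1) * ((1 / (K : ℝ)) * ∑ n, (σ K n 0) ^ 4 * (t K n) ^ 2)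
    (∀ᶠ (K : ℕ) in atTop, IsUnit (1 - A K)) ∧
    (∃ c : ℝ, 0 < c ∧ ∀ᶠ (K : ℕ) in atTop, c ≤ Θsq K) ∧
    (∃ C : ℝ, ∀ᶠ (K : ℕ) in atTop, Θsq K ≤ C) := by
  intro A Δ g Θsq
  obtain ⟨a, ha, hKN⟩ := hratio_lb
  have hm4 : 0 ≤ (∫ ω, ‖W ω‖ ^ 4 ∂μ) - 1 := sub_nonneg.mpr (one_le_integral_norm_pow_four hWvar hW4)
  have hsol (K : ℕ) : SINR.IsPosSolution ρ (fun n k => σ K n k.succ ^ 2) (t K) (tt K) :=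
    ⟨ht_pos K, htt_pos K, ht_eq K, htt_eq K⟩
  have hd (K : ℕ) (n : Fin (N K)) (k : Fin K) : 0 ≤ σ K n k.succ ^ 2 := sq_nonneg _
  have hσ2 (K : ℕ) n k : σ K n k ^ 2 ≤ σmax ^ 2 := pow_le_pow_left₀ (hσ K n k) (hA2 K n k) 2
  have hds (K : ℕ) (n : Fin (N K)) (k : Fin K) : σ K n k.succ ^ 2 ≤ σmax ^ 2 := hσ2 K n k.succ
  have hNK : ∀ᶠ K : ℕ in atTop, (N K : ℝ) / K ≤ a⁻¹ :=
    hKN.mono fun K hK => by rw [← inv_div]; exact inv_anti₀ ha hK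
  have hΘ (K : ℕ) : Θsq K =
      SINR.quadTerm (fun n => σ K n 0) (fun n k => σ K n k.succ ^ 2) (t K) +
        ((∫ ω, ‖W ω‖ ^ 4 ∂μ) - 1) * ((1 / (K : ℝ)) * ∑ n, σ K n 0 ^ 4 * t K n ^ 2) := rfl
  have hs := sq_nonneg σmax
  set s := σmax ^ 2
  refine ⟨.of_forall fun K => (hsol K).isUnit_one_sub_fluctMatrix (hd K) hρ (hds K) hs, ?_, ?_⟩
  · rcases hA4 with hW | ⟨c, hc, hA4⟩
    · obtain ⟨c3, hc3, hA3⟩ := hA3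
      refine ⟨((∫ ω, ‖W ω‖ ^ 4 ∂μ) - 1) * (a * c3 ^ 2 * (1 / (ρ + s)) ^ 2),
        mul_pos (sub_pos.mpr hW) (by positivity), ?_⟩
      filter_upwards [hKN, hA3] with K hK hK3
      rw [hΘ]
      exact le_add_of_nonneg_of_le ((hsol K).quadTerm_nonneg (hd K) hρ (hds K) hs)
        (mul_le_mul_of_nonneg_left
          ((hsol K).mul_le_avg_fourth (hd K) hρ (hds K) hs ha hK hc3.le (hK3 0)) hm4)
    · refine ⟨(ρ / (ρ + a⁻¹ * s)) ^ 2 * ((1 / (ρ + s)) ^ 2 * c) ^ 2, by positivity, ?_⟩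
      filter_upwards [hNK, hA4] with K hK hK4
      rw [hΘ]
      exact le_add_of_le_of_nonneg
        ((hsol K).mul_sq_le_quadTerm (hd K) hρ (hds K) hs hK hc.le hK4)
        (mul_nonneg hm4 (by positivity))
  · set G := a⁻¹ * (s * s * (1 / ρ) ^ 2)
    refine ⟨G * (G * (1 - s / (ρ + s))⁻¹) + ((∫ ω, ‖W ω‖ ^ 4 ∂μ) - 1) * G,
      hNK.mono fun K hK => ?_⟩
    rw [hΘ]
    exact add_le_add ((hsol K).quadTerm_le (hd K) hρ (hds K) hs (fun n => hσ2 K n 0) hK)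
      (mul_le_mul_of_nonneg_left ((hsol K).avg_fourth_le (hd K) hρ (fun n => hσ2 K n 0) hK) hm4)

/-- The variance `Θ_K²` of the CLT for the SINR is well defined (for large `K`, the matrix
`I_K − A_K` is invertible) and satisfies `0 < liminf Θ_K² ≤ limsup Θ_K² < ∞`, under
assumptions (A2), (A3), (A4). Here
`[A_K]_{ℓm} = (1/K)((1/K) tr (D_ℓ D_m T²)) / (1 + (1/K) tr (D_ℓ T))²`,
`Δ_K = diag((1 + (1/K) tr (D_ℓ T))²)`, `g_K = ((1/K) tr (D₀ D_k T²))_k`, and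
`Θ_K² = (1/K) g_Kᵀ (I − A_K)⁻¹ Δ_K⁻¹ g_K + (E|W|⁴ − 1)(1/K) tr (D₀² T²)`. -/
theorem stmt_7
    {Ω : Type} [MeasurableSpace Ω] (μ : Measure Ω) [IsProbabilityMeasure μ]
    (ρ : ℝ) (hρ : 0 < ρ)
    (N : ℕ → ℕ) (hNpos : ∀ K, 0 < N K)
    (hratio_lb : ∃ c : ℝ, 0 < c ∧ ∀ᶠ (K : ℕ) in atTop, c ≤ (K : ℝ) / (N K : ℝ))
    (hratio_ub : ∃ C : ℝ, ∀ᶠ (K : ℕ) in atTop, (K : ℝ) / (N K : ℝ) ≤ C)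
    (σ : (K : ℕ) → Fin (N K) → Fin (K + 1) → ℝ)
    (hσ : ∀ K n k, 0 ≤ σ K n k)
    (σmax : ℝ) (hA2 : ∀ K n k, σ K n k ≤ σmax)
    -- the random variable `W_{10}`, with unit second moment and finite fourth moment
    (W : Ω → ℂ) (hWmeas : Measurable W)
    (hWvar : ∫ ω, ‖W ω‖ ^ 2 ∂μ = 1)
    (hW4 : Integrable (fun ω => ‖W ω‖ ^ 4) μ)
    -- (A3)
    (hA3 : ∃ c : ℝ, 0 < c ∧ ∀ᶠ (K : ℕ) in atTop, ∀ k : Fin (K + 1),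
      c ≤ (1 / (K : ℝ)) * ∑ n, (σ K n k) ^ 2)
    -- (A4)
    (hA4 : 1 < ∫ ω, ‖W ω‖ ^ 4 ∂μ ∨
      ∃ c : ℝ, 0 < c ∧ ∀ᶠ (K : ℕ) in atTop,
        c ≤ (1 / (K : ℝ) ^ 2) * ∑ k : Fin K, ∑ n, (σ K n 0) ^ 2 * (σ K n k.succ) ^ 2)
    -- the positive solution of the deterministic system at `z = -ρ`
    (t : (K : ℕ) → Fin (N K) → ℝ) (tt : (K : ℕ) → Fin K → ℝ)
    (ht_pos : ∀ K n, 0 < t K n) (htt_pos : ∀ K k, 0 < tt K k)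
    (ht_eq : ∀ K (n : Fin (N K)), t K n =
      1 / (ρ * (1 + (1 / (K : ℝ)) * ∑ k : Fin K, (σ K n k.succ) ^ 2 * tt K k)))
    (htt_eq : ∀ K (k : Fin K), tt K k =
      1 / (ρ * (1 + (1 / (K : ℝ)) * ∑ n, (σ K n k.succ) ^ 2 * t K n))) :
    let A : (K : ℕ) → Matrix (Fin K) (Fin K) ℝ := fun K => Matrix.of fun ℓ m =>
      (1 / (K : ℝ)) *
        ((1 / (K : ℝ)) * ∑ n, (σ K n ℓ.succ) ^ 2 * (σ K n m.succ) ^ 2 * (t K n) ^ 2) /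
        (1 + (1 / (K : ℝ)) * ∑ n, (σ K n ℓ.succ) ^ 2 * t K n) ^ 2
    let Δ : (K : ℕ) → Matrix (Fin K) (Fin K) ℝ := fun K => Matrix.diagonal fun ℓ =>
      (1 + (1 / (K : ℝ)) * ∑ n, (σ K n ℓ.succ) ^ 2 * t K n) ^ 2
    let g : (K : ℕ) → Fin K → ℝ := fun K k =>
      (1 / (K : ℝ)) * ∑ n, (σ K n 0) ^ 2 * (σ K n k.succ) ^ 2 * (t K n) ^ 2
    let Θsq : ℕ → ℝ := fun K =>
      (1 / (K : ℝ)) * dotProduct (g K) (((1 - A K)⁻¹ * (Δ K)⁻¹).mulVec (g K))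
        + ((∫ ω, ‖W ω‖ ^ 4 ∂μ) - 1) * ((1 / (K : ℝ)) * ∑ n, (σ K n 0) ^ 4 * (t K n) ^ 2)
    (∀ᶠ (K : ℕ) in atTop, IsUnit (1 - A K)) ∧
    (∃ c : ℝ, 0 < c ∧ ∀ᶠ (K : ℕ) in atTop, c ≤ Θsq K) ∧
    (∃ C : ℝ, ∀ᶠ (K : ℕ) in atTop, Θsq K ≤ C) :=
  stmt_7_general μ ρ hρ N hratio_lb σ hσ σmax hA2 W hWvar hW4 hA3 hA4 t tt ht_pos htt_pos ht_eq
    htt_eq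
end

section
/- Assume (A2) and (A3), and let A_K be the K×K matrix with entries [A_K]_{ℓm} = (1/K) · ( (1/K) tr( D_ℓ D_m T(−ρ)² ) ) / ( 1 + (1/K) tr( D_ℓ T(−ρ) ) )². Then: (1) the matrix I_K − A_K is invertible and (I_K − A_K)^{-1} has all entries nonnegative; (2) every diagonal entry of (I_K − A_K)^{-1} is ≥ 1; (3) limsup_K of the maximum row sum norm ||| (I_K − A_K)^{-1} |||_∞ is finite. -/
open Matrix Filter
open scoped BigOperators

noncomputable section

lemma neumann {K : ℕ} (M : Matrix (Fin K) (Fin K) ℝ) (v : Fin K → ℝ)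
    (θ a b : ℝ) (hθ0 : 0 ≤ θ) (hθ1 : θ < 1) (ha : 0 < a)
    (hM : ∀ i j, 0 ≤ M i j) (hav : ∀ i, a ≤ v i) (hvb : ∀ i, v i ≤ b)
    (hMv : ∀ i, ∑ j, M i j * v j ≤ θ * v i) :
    IsUnit (1 - M) ∧ (∀ i j, 0 ≤ (1 - M)⁻¹ i j) ∧ (∀ i, 1 ≤ (1 - M)⁻¹ i i) ∧
      ∀ i, ∑ j, |(1 - M)⁻¹ i j| ≤ b / (a * (1 - θ)) := by
  have hv : ∀ i, 0 < v i := fun i => lt_of_lt_of_le ha (hav i)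
  have hPn : ∀ n (i j : Fin K), 0 ≤ (M ^ n) i j := by
    intro n
    induction n with
    | zero =>
      intro i j
      rw [pow_zero, Matrix.one_apply]
      split <;> norm_num
    | succ n ih =>
      intro i j
      rw [pow_succ', Matrix.mul_apply]
      exact Finset.sum_nonneg fun k _ => mul_nonneg (hM i k) (ih k j)
  have hrow : ∀ n (i : Fin K), ∑ j, (M ^ n) i j * v j ≤ θ ^ n * v i := by
    intro n
    induction n with
    | zero =>
      intro i
      simp [Matrix.one_apply, ite_mul]
    | succ n ih =>
      intro i
      have h1 : ∑ j, (M ^ (n+1)) i j * v j = ∑ k, M i k * ∑ j, (M ^ n) k j * v j := by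
        simp only [pow_succ', Matrix.mul_apply, Finset.sum_mul, Finset.mul_sum, mul_assoc]
        exact Finset.sum_comm
      rw [h1]
      calc ∑ k, M i k * ∑ j, (M ^ n) k j * v j
          ≤ ∑ k, M i k * (θ ^ n * v k) :=
            Finset.sum_le_sum fun k _ => mul_le_mul_of_nonneg_left (ih k) (hM i k)
        _ = θ ^ n * ∑ k, M i k * v k := by
            rw [Finset.mul_sum]; exact Finset.sum_congr rfl fun k _ => by ring
        _ ≤ θ ^ n * (θ * v i) := mul_le_mul_of_nonneg_left (hMv i) (pow_nonneg hθ0 n)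
        _ = θ ^ (n+1) * v i := by ring
  have hent : ∀ n (i j : Fin K), (M ^ n) i j ≤ θ ^ n * (b / a) := by
    intro n i j
    have h := Finset.single_le_sum (f := fun j => (M ^ n) i j * v j)
      (fun k _ => mul_nonneg (hPn n i k) (hv k).le) (Finset.mem_univ j)
    rw [show θ ^ n * (b / a) = θ ^ n * b / a by ring, le_div_iff₀ ha]
    have h1 : (M ^ n) i j * a ≤ (M ^ n) i j * v j :=
      mul_le_mul_of_nonneg_left (hav j) (hPn n i j)
    have h2 : θ ^ n * v i ≤ θ ^ n * b :=
      mul_le_mul_of_nonneg_left (hvb i) (pow_nonneg hθ0 n)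
    have h' : (M ^ n) i j * v j ≤ ∑ x, (M ^ n) i x * v x := h
    linarith [hrow n i]
  have hsummable : ∀ i j : Fin K, Summable fun n => (M ^ n) i j := fun i j =>
    Summable.of_nonneg_of_le (fun n => hPn n i j) (fun n => hent n i j)
      ((summable_geometric_of_lt_one hθ0 hθ1).mul_right (b / a))
  set S : Matrix (Fin K) (Fin K) ℝ := Matrix.of fun i j => ∑' n, (M ^ n) i j with hSdef
  have hMS : ∀ i j, (M * S) i j = ∑' n, (M ^ (n+1)) i j := by
    intro i j
    rw [Matrix.mul_apply]
    have h1 : ∀ k, M i k * S k j = ∑' n, M i k * (M ^ n) k j := fun k => by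
      simp only [hSdef, Matrix.of_apply]; exact (tsum_mul_left).symm
    rw [Finset.sum_congr rfl fun k _ => h1 k,
      ← Summable.tsum_finsetSum fun k _ => (hsummable k j).mul_left (M i k)]
    exact tsum_congr fun n => by rw [pow_succ', Matrix.mul_apply]
  have hS1 : (1 - M) * S = 1 := by
    ext i j
    rw [Matrix.sub_mul, Matrix.one_mul, Matrix.sub_apply, hMS]
    have h0 := Summable.tsum_eq_zero_add (hsummable i j)
    show S i j - _ = _
    simp only [hSdef, Matrix.of_apply]
    rw [h0, pow_zero]
    ring
  have hU : IsUnit (1 - M) := by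
    have := invertibleOfRightInverse _ _ hS1
    exact isUnit_of_invertible _
  have hInvS : (1 - M)⁻¹ = S := Matrix.inv_eq_right_inv hS1
  have hS0 : ∀ i j, 0 ≤ S i j := fun i j => tsum_nonneg fun n => hPn n i j
  refine ⟨hU, ?_, ?_, ?_⟩
  · intro i j; rw [hInvS]; exact hS0 i j
  · intro i
    rw [hInvS]
    have h := Summable.le_tsum (hsummable i i) 0 (fun n _ => hPn n i i)
    simpa [hSdef, Matrix.one_apply_eq] using h
  · intro i
    have h1θ : 0 < 1 - θ := by linarith
    have h1 : a * ∑ j, S i j ≤ ∑ j, S i j * v j := by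
      rw [Finset.mul_sum]
      exact Finset.sum_le_sum fun j _ => by
        have := mul_le_mul_of_nonneg_left (hav j) (hS0 i j)
        nlinarith [hS0 i j, hav j]
    have h2 : ∑ j, S i j * v j = ∑' n, ∑ j, (M ^ n) i j * v j := by
      have e : ∀ j : Fin K, S i j * v j = ∑' n, (M ^ n) i j * v j := fun j => by
        simp only [hSdef, Matrix.of_apply]; exact (tsum_mul_right).symm
      rw [Finset.sum_congr rfl fun j _ => e j]
      exact (Summable.tsum_finsetSum fun j _ => (hsummable i j).mul_right (v j)).symm
    have hsl : Summable fun n => ∑ j, (M ^ n) i j * v j :=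
      Summable.of_nonneg_of_le
        (fun n => Finset.sum_nonneg fun j _ => mul_nonneg (hPn n i j) (hv j).le)
        (fun n => hrow n i)
        ((summable_geometric_of_lt_one hθ0 hθ1).mul_right (v i))
    have h3 : ∑' n, ∑ j, (M ^ n) i j * v j ≤ ∑' n, θ ^ n * v i :=
      Summable.tsum_le_tsum (fun n => hrow n i) hsl
        ((summable_geometric_of_lt_one hθ0 hθ1).mul_right (v i))
    have h4 : ∑' n, θ ^ n * v i = (1 - θ)⁻¹ * v i := by
      rw [tsum_mul_right, tsum_geometric_of_lt_one hθ0 hθ1]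
    have hfin : a * ∑ j, S i j ≤ (1 - θ)⁻¹ * b := by
      have h5 : (1 - θ)⁻¹ * v i ≤ (1 - θ)⁻¹ * b :=
        mul_le_mul_of_nonneg_left (hvb i) (by positivity)
      calc a * ∑ j, S i j ≤ ∑ j, S i j * v j := h1
        _ = ∑' n, ∑ j, (M ^ n) i j * v j := h2
        _ ≤ ∑' n, θ ^ n * v i := h3
        _ = (1 - θ)⁻¹ * v i := h4
        _ ≤ (1 - θ)⁻¹ * b := h5
    have habs : ∑ j, |(1 - M)⁻¹ i j| = ∑ j, S i j := by
      rw [hInvS]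
      exact Finset.sum_congr rfl fun j _ => abs_of_nonneg (hS0 i j)
    rw [habs, le_div_iff₀ (by positivity)]
    calc (∑ j, S i j) * (a * (1 - θ)) = (a * ∑ j, S i j) * (1 - θ) := by ring
      _ ≤ ((1 - θ)⁻¹ * b) * (1 - θ) := mul_le_mul_of_nonneg_right hfin h1θ.le
      _ = b := by field_simp


lemma arith1 (X ρ u : ℝ) (hX : 0 ≤ X) (hρ : 0 < ρ) (hu : 0 ≤ u) :
    X / ρ * u / (1 + u) ^ 2 ≤ X * (1 / (ρ * (1 + u))) := by
  have h1u : (0:ℝ) < 1 + u := by linarith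
  have e : X / ρ * u / (1 + u) ^ 2 = (X * (1 / (ρ * (1 + u)))) * (u / (1 + u)) := by
    rw [mul_one_div, div_mul_div_comm, div_mul_eq_mul_div, div_div]
    congr 1
    ring
  rw [e]
  refine mul_le_of_le_one_right (by positivity) ?_
  rw [div_le_one h1u]
  linarith

set_option maxHeartbeats 1000000

/-- Properties of the matrix `A_K` with entries
`[A_K]_{ℓm} = (1/K)((1/K) tr (D_ℓ D_m T(−ρ)²)) / (1 + (1/K) tr (D_ℓ T(−ρ)))²`
under (A2) and (A3): `I_K − A_K` is invertible with entrywise nonnegative inverse, the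
diagonal entries of the inverse are `≥ 1`, and the maximum row sum norm of the inverse
stays bounded as `K → ∞`. -/
theorem stmt_13
    (ρ : ℝ) (hρ : 0 < ρ)
    (N : ℕ → ℕ) (hNpos : ∀ K, 0 < N K)
    (hratio_lb : ∃ c : ℝ, 0 < c ∧ ∀ᶠ (K : ℕ) in atTop, c ≤ (K : ℝ) / (N K : ℝ))
    (hratio_ub : ∃ C : ℝ, ∀ᶠ (K : ℕ) in atTop, (K : ℝ) / (N K : ℝ) ≤ C)
    (σ : (K : ℕ) → Fin (N K) → Fin (K + 1) → ℝ)
    (hσ : ∀ K n k, 0 ≤ σ K n k)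
    (σmax : ℝ) (hA2 : ∀ K n k, σ K n k ≤ σmax)
    (hA3 : ∃ c : ℝ, 0 < c ∧ ∀ᶠ (K : ℕ) in atTop, ∀ k : Fin (K + 1),
      c ≤ (1 / (K : ℝ)) * ∑ n, (σ K n k) ^ 2)
    (t : (K : ℕ) → Fin (N K) → ℝ) (tt : (K : ℕ) → Fin K → ℝ)
    (ht_pos : ∀ K n, 0 < t K n) (htt_pos : ∀ K k, 0 < tt K k)
    (ht_eq : ∀ K (n : Fin (N K)), t K n =
      1 / (ρ * (1 + (1 / (K : ℝ)) * ∑ k : Fin K, (σ K n k.succ) ^ 2 * tt K k)))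
    (htt_eq : ∀ K (k : Fin K), tt K k =
      1 / (ρ * (1 + (1 / (K : ℝ)) * ∑ n, (σ K n k.succ) ^ 2 * t K n))) :
    let A : (K : ℕ) → Matrix (Fin K) (Fin K) ℝ := fun K => Matrix.of fun ℓ m =>
      (1 / (K : ℝ)) *
        ((1 / (K : ℝ)) * ∑ n, (σ K n ℓ.succ) ^ 2 * (σ K n m.succ) ^ 2 * (t K n) ^ 2) /
        (1 + (1 / (K : ℝ)) * ∑ n, (σ K n ℓ.succ) ^ 2 * t K n) ^ 2
    (∀ᶠ (K : ℕ) in atTop,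
      IsUnit (1 - A K) ∧
      (∀ ℓ m, 0 ≤ (1 - A K)⁻¹ ℓ m) ∧
      (∀ ℓ, 1 ≤ (1 - A K)⁻¹ ℓ ℓ)) ∧
    (∃ C : ℝ, ∀ᶠ (K : ℕ) in atTop, ∀ ℓ : Fin K, ∑ m, |(1 - A K)⁻¹ ℓ m| ≤ C) := by

  intro A
  have hAapp : ∀ (K : ℕ) (ℓ m : Fin K), A K ℓ m =
      (1 / (K : ℝ)) *
        ((1 / (K : ℝ)) * ∑ n, (σ K n ℓ.succ) ^ 2 * (σ K n m.succ) ^ 2 * (t K n) ^ 2) /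
        (1 + (1 / (K : ℝ)) * ∑ n, (σ K n ℓ.succ) ^ 2 * t K n) ^ 2 := fun K ℓ m => rfl
  obtain ⟨c, hc0, hcev⟩ := hratio_lb
  have hσmax : 0 ≤ σmax := le_trans (hσ 0 ⟨0, hNpos 0⟩ 0) (hA2 0 ⟨0, hNpos 0⟩ 0)
  have hV0 : 0 ≤ σmax ^ 2 / ρ := by positivity
  have hθ0 : 0 ≤ σmax ^ 2 / ρ / (1 + σmax ^ 2 / ρ) := by positivity
  have hθ1 : σmax ^ 2 / ρ / (1 + σmax ^ 2 / ρ) < 1 := by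
    rw [div_lt_one (by linarith)]; linarith
  have ha : (0:ℝ) < 1 / (ρ * (1 + σmax ^ 2 / (c * ρ))) := by positivity
  -- global upper bounds on t and tt
  have htub : ∀ K n, t K n ≤ 1 / ρ := by
    intro K n
    rw [ht_eq K n]
    have hs : 0 ≤ (1 / (K : ℝ)) * ∑ k : Fin K, (σ K n k.succ) ^ 2 * tt K k :=
      mul_nonneg (by positivity)
        (Finset.sum_nonneg fun k _ => mul_nonneg (sq_nonneg _) (htt_pos K k).le)
    exact one_div_le_one_div_of_le hρ (by nlinarith)
  have httub : ∀ K k, tt K k ≤ 1 / ρ := by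
    intro K k
    rw [htt_eq K k]
    have hs : 0 ≤ (1 / (K : ℝ)) * ∑ n, (σ K n k.succ) ^ 2 * t K n :=
      mul_nonneg (by positivity)
        (Finset.sum_nonneg fun n _ => mul_nonneg (sq_nonneg _) (ht_pos K n).le)
    exact one_div_le_one_div_of_le hρ (by nlinarith)
  have main : ∀ᶠ (K : ℕ) in atTop,
      (IsUnit (1 - A K) ∧ (∀ ℓ m, 0 ≤ (1 - A K)⁻¹ ℓ m) ∧ (∀ ℓ, 1 ≤ (1 - A K)⁻¹ ℓ ℓ)) ∧
      ∀ ℓ : Fin K, ∑ m, |(1 - A K)⁻¹ ℓ m| ≤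
        (1 / ρ) / (1 / (ρ * (1 + σmax ^ 2 / (c * ρ))) *
          (1 - σmax ^ 2 / ρ / (1 + σmax ^ 2 / ρ))) := by
    filter_upwards [hcev] with K hK
    have hN0 : (0:ℝ) < N K := by exact_mod_cast hNpos K
    have hcN : c * N K ≤ (K : ℝ) := (le_div_iff₀ hN0).mp hK
    -- lower bound on tt
    have hu_ub : ∀ k : Fin K, (1 / (K : ℝ)) * ∑ n, (σ K n k.succ) ^ 2 * t K n ≤
        σmax ^ 2 / (c * ρ) := by
      intro k
      have hK0 : (0:ℝ) < K := by exact_mod_cast k.pos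
      have hsum : ∑ n, (σ K n k.succ) ^ 2 * t K n ≤ (N K : ℝ) * (σmax ^ 2 * (1 / ρ)) := by
        calc ∑ n, (σ K n k.succ) ^ 2 * t K n
            ≤ ∑ _n : Fin (N K), σmax ^ 2 * (1 / ρ) :=
              Finset.sum_le_sum fun n _ =>
                mul_le_mul (by nlinarith [hσ K n k.succ, hA2 K n k.succ])
                  (htub K n) (ht_pos K n).le (by positivity)
          _ = (N K : ℝ) * (σmax ^ 2 * (1 / ρ)) := by
              simp [Finset.sum_const, mul_comm]
      have e : (1 / (K : ℝ)) * ((N K : ℝ) * (σmax ^ 2 * (1 / ρ))) =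
          ((N K : ℝ) * σmax ^ 2) / ((K : ℝ) * ρ) := by
        field_simp
      calc (1 / (K : ℝ)) * ∑ n, (σ K n k.succ) ^ 2 * t K n
          ≤ (1 / (K : ℝ)) * ((N K : ℝ) * (σmax ^ 2 * (1 / ρ))) :=
            mul_le_mul_of_nonneg_left hsum (by positivity)
        _ = ((N K : ℝ) * σmax ^ 2) / ((K : ℝ) * ρ) := e
        _ ≤ σmax ^ 2 / (c * ρ) := by
            rw [div_le_div_iff₀ (by positivity) (by positivity)]
            nlinarith [mul_le_mul_of_nonneg_right hcN
              (mul_nonneg (sq_nonneg σmax) hρ.le)]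
    have hav : ∀ k : Fin K, 1 / (ρ * (1 + σmax ^ 2 / (c * ρ))) ≤ tt K k := by
      intro k
      rw [htt_eq K k]
      have hu0 : 0 ≤ (1 / (K : ℝ)) * ∑ n, (σ K n k.succ) ^ 2 * t K n :=
        mul_nonneg (by positivity)
          (Finset.sum_nonneg fun n _ => mul_nonneg (sq_nonneg _) (ht_pos K n).le)
      refine one_div_le_one_div_of_le (mul_pos hρ (by linarith)) ?_
      have := hu_ub k
      nlinarith
    have hMnn : ∀ ℓ m : Fin K, 0 ≤ A K ℓ m := by
      intro ℓ m
      rw [hAapp]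
      have h1 : 0 ≤ ∑ n, (σ K n ℓ.succ) ^ 2 * (σ K n m.succ) ^ 2 * (t K n) ^ 2 :=
        Finset.sum_nonneg fun n _ => by positivity
      positivity
    have hMv : ∀ ℓ : Fin K, ∑ m, A K ℓ m * tt K m ≤
        (σmax ^ 2 / ρ / (1 + σmax ^ 2 / ρ)) * tt K ℓ := by
      intro ℓ
      have hK0 : (0:ℝ) < K := by exact_mod_cast ℓ.pos
      have hu0 : 0 ≤ (1 / (K : ℝ)) * ∑ n, (σ K n ℓ.succ) ^ 2 * t K n :=
        mul_nonneg (by positivity)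
          (Finset.sum_nonneg fun n _ => mul_nonneg (sq_nonneg _) (ht_pos K n).le)
      have hvv0 : ∀ n : Fin (N K),
          0 ≤ (1 / (K : ℝ)) * ∑ k : Fin K, (σ K n k.succ) ^ 2 * tt K k := fun n =>
        mul_nonneg (by positivity)
          (Finset.sum_nonneg fun k _ => mul_nonneg (sq_nonneg _) (htt_pos K k).le)
      have hvv_ub : ∀ n : Fin (N K),
          (1 / (K : ℝ)) * ∑ k : Fin K, (σ K n k.succ) ^ 2 * tt K k ≤ σmax ^ 2 / ρ := by
        intro n
        have hsum : ∑ k : Fin K, (σ K n k.succ) ^ 2 * tt K k ≤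
            (K : ℝ) * (σmax ^ 2 * (1 / ρ)) := by
          calc ∑ k : Fin K, (σ K n k.succ) ^ 2 * tt K k
              ≤ ∑ _k : Fin K, σmax ^ 2 * (1 / ρ) :=
                Finset.sum_le_sum fun k _ =>
                  mul_le_mul (by nlinarith [hσ K n k.succ, hA2 K n k.succ])
                    (httub K k) (htt_pos K k).le (by positivity)
            _ = (K : ℝ) * (σmax ^ 2 * (1 / ρ)) := by
                simp [Finset.sum_const, mul_comm]
        calc (1 / (K : ℝ)) * ∑ k : Fin K, (σ K n k.succ) ^ 2 * tt K k
            ≤ (1 / (K : ℝ)) * ((K : ℝ) * (σmax ^ 2 * (1 / ρ))) :=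
              mul_le_mul_of_nonneg_left hsum (by positivity)
          _ = σmax ^ 2 / ρ := by field_simp
      have htv : ∀ n : Fin (N K),
          (t K n) ^ 2 * ((1 / (K : ℝ)) * ∑ k : Fin K, (σ K n k.succ) ^ 2 * tt K k) ≤
            t K n * ((σmax ^ 2 / ρ / (1 + σmax ^ 2 / ρ)) / ρ) := by
        intro n
        have h1w : (0:ℝ) < 1 + (1 / (K : ℝ)) * ∑ k : Fin K, (σ K n k.succ) ^ 2 * tt K k := by
          linarith [hvv0 n]
        have h1 : t K n * ((1 / (K : ℝ)) * ∑ k : Fin K, (σ K n k.succ) ^ 2 * tt K k) ≤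
            (σmax ^ 2 / ρ / (1 + σmax ^ 2 / ρ)) / ρ := by
          rw [ht_eq K n]
          have e : (1:ℝ) / (ρ * (1 + (1 / (K : ℝ)) * ∑ k : Fin K, (σ K n k.succ) ^ 2 * tt K k)) *
                ((1 / (K : ℝ)) * ∑ k : Fin K, (σ K n k.succ) ^ 2 * tt K k) =
              ((1 / (K : ℝ)) * ∑ k : Fin K, (σ K n k.succ) ^ 2 * tt K k) /
                (ρ * (1 + (1 / (K : ℝ)) * ∑ k : Fin K, (σ K n k.succ) ^ 2 * tt K k)) := by
            ring
          rw [e, div_div, div_le_div_iff₀ (by positivity) (by positivity)]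
          nlinarith [hvv_ub n, hvv0 n, mul_le_mul_of_nonneg_left (hvv_ub n) hρ.le]
        calc (t K n) ^ 2 * ((1 / (K : ℝ)) * ∑ k : Fin K, (σ K n k.succ) ^ 2 * tt K k)
            = t K n * (t K n * ((1 / (K : ℝ)) * ∑ k : Fin K, (σ K n k.succ) ^ 2 * tt K k)) := by
              ring
          _ ≤ t K n * ((σmax ^ 2 / ρ / (1 + σmax ^ 2 / ρ)) / ρ) :=
              mul_le_mul_of_nonneg_left h1 (ht_pos K n).le
      have e1 : ∑ m, A K ℓ m * tt K m =
          ∑ n, ((1 / (K : ℝ)) * (σ K n ℓ.succ) ^ 2 /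
              (1 + (1 / (K : ℝ)) * ∑ n', (σ K n' ℓ.succ) ^ 2 * t K n') ^ 2) *
            ((t K n) ^ 2 * ((1 / (K : ℝ)) * ∑ m, (σ K n m.succ) ^ 2 * tt K m)) := by
        calc ∑ m, A K ℓ m * tt K m
            = ∑ m, ∑ n, (1 / (K : ℝ)) *
                ((1 / (K : ℝ)) * ((σ K n ℓ.succ) ^ 2 * (σ K n m.succ) ^ 2 * (t K n) ^ 2)) /
                (1 + (1 / (K : ℝ)) * ∑ n', (σ K n' ℓ.succ) ^ 2 * t K n') ^ 2 * tt K m := by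
              refine Finset.sum_congr rfl fun m _ => ?_
              rw [hAapp, Finset.mul_sum, Finset.mul_sum, Finset.sum_div, Finset.sum_mul]
          _ = ∑ n, ∑ m, (1 / (K : ℝ)) *
                ((1 / (K : ℝ)) * ((σ K n ℓ.succ) ^ 2 * (σ K n m.succ) ^ 2 * (t K n) ^ 2)) /
                (1 + (1 / (K : ℝ)) * ∑ n', (σ K n' ℓ.succ) ^ 2 * t K n') ^ 2 * tt K m :=
              Finset.sum_comm
          _ = _ := by
              refine Finset.sum_congr rfl fun n _ => ?_
              simp only [Finset.mul_sum]
              refine Finset.sum_congr rfl fun m _ => by ring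
      rw [e1]
      have e2 : ∑ n, ((1 / (K : ℝ)) * (σ K n ℓ.succ) ^ 2 /
              (1 + (1 / (K : ℝ)) * ∑ n', (σ K n' ℓ.succ) ^ 2 * t K n') ^ 2) *
            (t K n * ((σmax ^ 2 / ρ / (1 + σmax ^ 2 / ρ)) / ρ)) =
          ((σmax ^ 2 / ρ / (1 + σmax ^ 2 / ρ)) / ρ) *
            ((1 / (K : ℝ)) * ∑ n, (σ K n ℓ.succ) ^ 2 * t K n) /
            (1 + (1 / (K : ℝ)) * ∑ n', (σ K n' ℓ.succ) ^ 2 * t K n') ^ 2 := by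
        simp only [Finset.mul_sum]
        rw [Finset.sum_div]
        refine Finset.sum_congr rfl fun n _ => by ring
      calc ∑ n, ((1 / (K : ℝ)) * (σ K n ℓ.succ) ^ 2 /
              (1 + (1 / (K : ℝ)) * ∑ n', (σ K n' ℓ.succ) ^ 2 * t K n') ^ 2) *
            ((t K n) ^ 2 * ((1 / (K : ℝ)) * ∑ m, (σ K n m.succ) ^ 2 * tt K m))
          ≤ ∑ n, ((1 / (K : ℝ)) * (σ K n ℓ.succ) ^ 2 /
              (1 + (1 / (K : ℝ)) * ∑ n', (σ K n' ℓ.succ) ^ 2 * t K n') ^ 2) *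
            (t K n * ((σmax ^ 2 / ρ / (1 + σmax ^ 2 / ρ)) / ρ)) := by
            refine Finset.sum_le_sum fun n _ => ?_
            refine mul_le_mul_of_nonneg_left (htv n) ?_
            have h2 : (0:ℝ) ≤ (1 + (1 / (K : ℝ)) * ∑ n', (σ K n' ℓ.succ) ^ 2 * t K n') ^ 2 :=
              sq_nonneg _
            positivity
        _ = ((σmax ^ 2 / ρ / (1 + σmax ^ 2 / ρ)) / ρ) *
              ((1 / (K : ℝ)) * ∑ n, (σ K n ℓ.succ) ^ 2 * t K n) /
              (1 + (1 / (K : ℝ)) * ∑ n', (σ K n' ℓ.succ) ^ 2 * t K n') ^ 2 := e2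
        _ ≤ (σmax ^ 2 / ρ / (1 + σmax ^ 2 / ρ)) * tt K ℓ := by
            rw [htt_eq K ℓ]
            exact arith1 _ ρ _ hθ0 hρ hu0
    obtain ⟨hU, hpos, hdiag, hrowsum⟩ :=
      neumann (A K) (tt K) (σmax ^ 2 / ρ / (1 + σmax ^ 2 / ρ))
        (1 / (ρ * (1 + σmax ^ 2 / (c * ρ)))) (1 / ρ)
        hθ0 hθ1 ha hMnn hav (httub K) hMv
    exact ⟨⟨hU, hpos, hdiag⟩, hrowsum⟩
  exact ⟨main.mono fun K h => h.1,
    ⟨(1 / ρ) / (1 / (ρ * (1 + σmax ^ 2 / (c * ρ))) *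
      (1 - σmax ^ 2 / ρ / (1 + σmax ^ 2 / ρ))), main.mono fun K h => h.2⟩⟩


end
end
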